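/- arXiv:2201.00453 — 7 statements merged into one kernel-verified Lean document; each statement's English description precedes it below -/
import Mathlib

section
/- Let ℓ ≥ 1 and let F_ℓ = ℓP_3 be the linear forest consisting of ℓ vertex-disjoint paths on 3 vertices, so that p = ℓ − 1. Then for every integer m with m ≥ p+1 there exists N (depending on m and ℓ) such that for all n ≥ N: ex(m,n;ℓP_3) = p·n + m − p. Moreover, every ℓP_3-free bipartite graph with parts of sizes m and n having exactly p·n + m − p edges is isomorphic to the graph obtained from K_{p,n} by adding m − p new vertices and joining them by m − p independent edges to m − p distinct vertices of degree p of K_{p,n} (vertices in the side of size n). -/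
open SimpleGraph

/-- `G` contains a subgraph isomorphic to `H`, i.e. there is an injective
graph homomorphism from `H` into `G`. -/
def ContainsCopy {α β : Type*} (G : SimpleGraph α) (H : SimpleGraph β) : Prop :=
  ∃ f : β → α, Function.Injective f ∧ ∀ ⦃a b⦄, H.Adj a b → G.Adj (f a) (f b)

/-- The linear forest `P_{k 0} ∪ ⋯ ∪ P_{k (ℓ-1)}`, a disjoint union of paths. -/
def linearForest {ℓ : ℕ} (k : Fin ℓ → ℕ) : SimpleGraph ((i : Fin ℓ) × Fin (k i)) where
  Adj a b := a.1 = b.1 ∧ (a.2.val + 1 = b.2.val ∨ b.2.val + 1 = a.2.val)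
  symm := ⟨fun a b h => ⟨h.1.symm, h.2.symm⟩⟩
  loopless := ⟨fun a h => by have := h.2; omega⟩

/-- The path on `k` vertices. -/
def pathG (k : ℕ) : SimpleGraph (Fin k) where
  Adj a b := a.val + 1 = b.val ∨ b.val + 1 = a.val
  symm := ⟨fun a b h => h.symm⟩
  loopless := ⟨fun a h => by omega⟩

/-- A graph on `Fin m ⊕ Fin n` respects the bipartition into the two `Fin` parts. -/
def IsBip {m n : ℕ} (G : SimpleGraph (Fin m ⊕ Fin n)) : Prop :=
  ∀ a b, G.Adj a b → a.isLeft ≠ b.isLeft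

/-- The bipartite graph on parts `Fin m` and `Fin n` whose edges are given by
the relation `r`. -/
def bipGraph (m n : ℕ) (r : Fin m → Fin n → Prop) : SimpleGraph (Fin m ⊕ Fin n) where
  Adj a b := (∃ i j, r i j ∧ a = Sum.inl i ∧ b = Sum.inr j) ∨
             (∃ i j, r i j ∧ a = Sum.inr j ∧ b = Sum.inl i)
  symm := ⟨fun a b h => by
    rcases h with ⟨i, j, hr, ha, hb⟩ | ⟨i, j, hr, ha, hb⟩
    · exact Or.inr ⟨i, j, hr, hb, ha⟩
    · exact Or.inl ⟨i, j, hr, hb, ha⟩⟩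
  loopless := ⟨fun a h => by
    rcases h with ⟨i, j, _, h1, h2⟩ | ⟨i, j, _, h1, h2⟩ <;> subst h1 <;> simp at h2⟩

/-- The bipartite Turán number `ex(m, n; H)`: the maximum number of edges of an
`H`-free bipartite graph with parts of sizes `m` and `n`. -/
noncomputable def bipEx (m n : ℕ) {β : Type*} (H : SimpleGraph β) : ℕ :=
  sSup {e | ∃ G : SimpleGraph (Fin m ⊕ Fin n),
    IsBip G ∧ ¬ ContainsCopy G H ∧ G.edgeSet.ncard = e}

-- The adjacency matrix of a graph on `Fin n`, over `ℝ`.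
open Classical in
noncomputable def adjMat {n : ℕ} (G : SimpleGraph (Fin n)) : Matrix (Fin n) (Fin n) ℝ :=
  fun i j => if G.Adj i j then 1 else 0

/-- The spectral radius (largest adjacency eigenvalue) of a graph on `Fin n`. -/
noncomputable def specRad {n : ℕ} (G : SimpleGraph (Fin n)) : ℝ :=
  sSup {μ : ℝ | Module.End.HasEigenvalue (Matrix.toLin' (adjMat G)) μ}

/-- The least adjacency eigenvalue of a graph on `Fin n`. -/
noncomputable def leastEig {n : ℕ} (G : SimpleGraph (Fin n)) : ℝ :=
  sInf {μ : ℝ | Module.End.HasEigenvalue (Matrix.toLin' (adjMat G)) μ}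

/-!
Call a left vertex heavy if its degree is at least `3ℓ`. Heavy vertices can greedily be made the
centres of vertex-disjoint cherries (copies of `P₃`), so an `ℓP₃`-free graph has at most
`p = ℓ - 1` of them, and if it has exactly `p`, the graph left after deleting them contains no
cherry at all, i.e. is a matching. Then there are at most `pn + (m - p)` edges, with equality
only for `K_{p,n}` plus a matching; with fewer heavy vertices there are at most
`(p - 1)n + 3ℓm` edges, which is less once `n` is large. Conversely every cherry of the extremal
graph meets its `p` full vertices, so it contains no `ℓP₃`.
-/

open Finset

section Cherries

variable {V : Type*} {G : SimpleGraph V}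

def ContainsCopyAvoiding {α β : Type*} (G : SimpleGraph α) (H : SimpleGraph β) (B : Set α) :
    Prop :=
  ∃ f : β → α, Function.Injective f ∧ (∀ ⦃a b⦄, H.Adj a b → G.Adj (f a) (f b)) ∧ ∀ b, f b ∉ B

theorem ContainsCopyAvoiding.containsCopy {β : Type*} {H : SimpleGraph β} {B : Set V}
    (h : ContainsCopyAvoiding G H B) : ContainsCopy G H :=
  let ⟨f, hf, hadj, _⟩ := h; ⟨f, hf, hadj⟩

theorem ContainsCopyAvoiding.mono {β : Type*} {H : SimpleGraph β} {B B' : Set V}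
    (h : ContainsCopyAvoiding G H B') (hB : B ⊆ B') : ContainsCopyAvoiding G H B :=
  let ⟨f, hf, hadj, hB'⟩ := h; ⟨f, hf, hadj, fun b hb => hB' b (hB hb)⟩

theorem ContainsCopyAvoiding.linearForest_snoc {ℓ : ℕ} {k : Fin (ℓ + 1) → ℕ} {B : Set V}
    {c : Fin (k (Fin.last ℓ)) → V} (hc : Function.Injective c)
    (hcG : ∀ ⦃a b⦄, (pathG _).Adj a b → G.Adj (c a) (c b)) (hcB : ∀ j, c j ∉ B)
    (h : ContainsCopyAvoiding G (linearForest fun i : Fin ℓ => k i.castSucc) (B ∪ Set.range c)) :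
    ContainsCopyAvoiding G (linearForest k) B := by
  obtain ⟨f, hf, hadj, hfB⟩ := h
  let g : (Σ i, Fin (k i)) → V := fun q =>
    Fin.lastCases (motive := fun i => Fin (k i) → V) c (fun i j => f ⟨i, j⟩) q.1 q.2
  refine ⟨g, ?_, ?_, ?_⟩
  · rintro ⟨i, j⟩ ⟨i', j'⟩ hgg
    cases i using Fin.lastCases <;> cases i' using Fin.lastCases <;>
      simp only [g, Fin.lastCases_last, Fin.lastCases_castSucc] at hgg
    · rw [hc hgg]
    · exact (hfB _ (Set.mem_union_right B (Set.mem_range.mpr ⟨j, hgg⟩))).elim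
    · exact (hfB _ (Set.mem_union_right B (Set.mem_range.mpr ⟨j', hgg.symm⟩))).elim
    · obtain ⟨rfl, hj⟩ := Sigma.mk.inj_iff.mp (hf hgg)
      rw [eq_of_heq hj]
  · rintro ⟨i, j⟩ ⟨i', j'⟩ ⟨hii' : i = i', hjj'⟩
    subst hii'
    cases i using Fin.lastCases <;> simp only [g, Fin.lastCases_last, Fin.lastCases_castSucc]
    · exact hcG hjj'
    · exact hadj ⟨rfl, hjj'⟩
  · rintro ⟨i, j⟩
    cases i using Fin.lastCases <;> simp only [g, Fin.lastCases_last, Fin.lastCases_castSucc]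
    · exact hcB j
    · exact fun hB => hfB _ (Set.mem_union_left _ hB)

theorem ContainsCopyAvoiding.addCherry {ℓ : ℕ} {B : Set V} {u v w : V}
    (h : ContainsCopyAvoiding G (linearForest fun _ : Fin ℓ => 3) (B ∪ {u, v, w}))
    (hvu : G.Adj v u) (hvw : G.Adj v w) (huw : u ≠ w) (hu : u ∉ B) (hv : v ∉ B) (hw : w ∉ B) :
    ContainsCopyAvoiding G (linearForest fun _ : Fin (ℓ + 1) => 3) B := by
  refine ContainsCopyAvoiding.linearForest_snoc (c := ![u, v, w]) ?_ ?_ ?_ ?_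
  · intro a b hab
    have := hvu.ne; have := hvw.ne
    fin_cases a <;> fin_cases b <;> simp_all [eq_comm]
  · intro a b hab
    fin_cases a <;> fin_cases b <;> simp_all [pathG, hvu.symm, hvw.symm]
  · intro j; fin_cases j <;> simpa
  · refine h.mono (Set.union_subset_union_right B ?_)
    rintro _ ⟨j, rfl⟩; fin_cases j <;> simp

/-- Greedily: a centre of degree at least `3|S| + |B|` still has two neighbours outside `S`, `B`
and the leaves already chosen. -/
theorem containsCopyAvoiding_of_le_degree [Fintype V] [DecidableEq V] [DecidableRel G.Adj]
    (S B : Finset V) (hSB : Disjoint S B) (hdeg : ∀ x ∈ S, 3 * #S + #B ≤ G.degree x) :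
    ContainsCopyAvoiding G (linearForest fun _ : Fin #S => 3) B := by
  induction S using Finset.induction_on generalizing B with
  | empty =>
    exact ⟨fun q => q.1.elim0, fun q => q.1.elim0, fun q => q.1.elim0, fun q => q.1.elim0⟩
  | @insert x S hx ih =>
    rw [card_insert_of_notMem hx] at hdeg ⊢
    have hxB : x ∉ B := disjoint_left.mp hSB (mem_insert_self x S)
    have hSB' : Disjoint S B := disjoint_of_subset_left (subset_insert x S) hSB
    have htwo : 1 < #(G.neighborFinset x \ (insert x S ∪ B)) := by
      have := le_card_sdiff (insert x S ∪ B) (G.neighborFinset x)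
      have := card_union_le (insert x S) B
      have := card_insert_le x S
      have := hdeg x (mem_insert_self x S)
      rw [card_neighborFinset_eq_degree] at *
      omega
    obtain ⟨u, hu, w, hw, huw⟩ := one_lt_card.mp htwo
    simp only [mem_sdiff, mem_neighborFinset, mem_union, mem_insert, not_or] at hu hw
    refine ContainsCopyAvoiding.addCherry ?_ hu.1 hw.1 huw hu.2.2 hxB hw.2.2
    have hB' : Disjoint S (B ∪ {u, x, w}) := by
      simp only [disjoint_union_right, disjoint_insert_right, disjoint_singleton_right]
      exact ⟨hSB', hu.2.1.2, hx, hw.2.1.2⟩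
    refine (ih (B ∪ {u, x, w}) hB' fun y hy => ?_).mono (by simp)
    have := card_union_le B {u, x, w}
    have := card_le_three (a := u) (b := x) (c := w)
    have := hdeg y (mem_insert_of_mem hy)
    omega

theorem card_lt_of_forall_le_degree [Fintype V] [DecidableEq V] [DecidableRel G.Adj] {ℓ : ℕ}
    (hfree : ¬ ContainsCopy G (linearForest fun _ : Fin ℓ => 3)) (S : Finset V)
    (hdeg : ∀ x ∈ S, 3 * ℓ ≤ G.degree x) : #S < ℓ := by
  by_contra! hS
  obtain ⟨S', hS'S, rfl⟩ := exists_subset_card_eq hS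
  refine hfree (containsCopyAvoiding_of_le_degree S' ∅ (disjoint_empty_right _) ?_).containsCopy
  simpa using fun x hx => hdeg x (hS'S hx)

/-- `G - T` has maximum degree at most one. -/
def NoCherryOutside (G : SimpleGraph V) (T : Set V) : Prop :=
  ∀ ⦃u v w⦄, u ∉ T → v ∉ T → w ∉ T → G.Adj v u → G.Adj v w → u = w

theorem noCherryOutside_of_forall_le_degree [Fintype V] [DecidableEq V] [DecidableRel G.Adj]
    {ℓ : ℕ} (hfree : ¬ ContainsCopy G (linearForest fun _ : Fin ℓ => 3)) (S : Finset V)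
    (hS : #S + 1 = ℓ) (hdeg : ∀ x ∈ S, 3 * ℓ ≤ G.degree x) : NoCherryOutside G S := by
  intro u v w hu hv hw hvu hvw
  by_contra huw
  subst hS
  have hSB : Disjoint S {u, v, w} := by
    simp only [disjoint_insert_right, disjoint_singleton_right]
    exact ⟨hu, hv, hw⟩
  have := containsCopyAvoiding_of_le_degree (G := G) S {u, v, w} hSB fun x hx => by
    have := card_le_three (a := u) (b := v) (c := w)
    have := hdeg x hx
    omega
  exact hfree ((this.mono (by simp)).addCherry (B := ∅) hvu hvw huw
    (Set.notMem_empty u) (Set.notMem_empty v) (Set.notMem_empty w)).containsCopy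

/-- Each of the `ℓ` disjoint cherries of a copy meets `T`. -/
theorem le_card_of_noCherryOutside {ℓ : ℕ} (T : Finset V) (hT : NoCherryOutside G T)
    (h : ContainsCopy G (linearForest fun _ : Fin ℓ => 3)) : ℓ ≤ #T := by
  obtain ⟨f, hf, hadj⟩ := h
  have hmeet : ∀ i, ∃ j, f ⟨i, j⟩ ∈ T := by
    intro i
    by_contra! hout
    have h02 := hf (hT (hout 0) (hout 1) (hout 2) (hadj ⟨rfl, .inr rfl⟩) (hadj ⟨rfl, .inl rfl⟩))
    simp at h02
  choose j hj using hmeet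
  simpa using card_le_card_of_injOn (s := univ) (fun i => f ⟨i, j i⟩) (fun i _ => hj i)
    fun i _ i' _ hii' => congrArg Sigma.fst (hf hii')

end Cherries

section Bipartite

open Sum

variable {m n : ℕ}

@[simp]
theorem bipGraph_adj_inl_inr {r : Fin m → Fin n → Prop} {x : Fin m} {y : Fin n} :
    (bipGraph m n r).Adj (inl x) (inr y) ↔ r x y := by
  simp [bipGraph]

@[simp]
theorem bipGraph_adj_inr_inl {r : Fin m → Fin n → Prop} {x : Fin m} {y : Fin n} :
    (bipGraph m n r).Adj (inr y) (inl x) ↔ r x y := by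
  simp [bipGraph]

@[simp]
theorem bipGraph_not_adj_inl_inl {r : Fin m → Fin n → Prop} {x x' : Fin m} :
    ¬ (bipGraph m n r).Adj (inl x) (inl x') := by
  simp [bipGraph]

@[simp]
theorem bipGraph_not_adj_inr_inr {r : Fin m → Fin n → Prop} {y y' : Fin n} :
    ¬ (bipGraph m n r).Adj (inr y) (inr y') := by
  simp [bipGraph]

theorem bipGraph_isBip (r : Fin m → Fin n → Prop) : IsBip (bipGraph m n r) := by
  rintro (x | y) (x' | y') h <;> simp_all

theorem IsBip.not_adj_inl_inl {G : SimpleGraph (Fin m ⊕ Fin n)} (hG : IsBip G) (x x' : Fin m) :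
    ¬ G.Adj (inl x) (inl x') :=
  fun h => hG _ _ h rfl

theorem IsBip.not_adj_inr_inr {G : SimpleGraph (Fin m ⊕ Fin n)} (hG : IsBip G) (y y' : Fin n) :
    ¬ G.Adj (inr y) (inr y') :=
  fun h => hG _ _ h rfl

theorem IsBip.eq_bipGraph {G : SimpleGraph (Fin m ⊕ Fin n)} (hG : IsBip G) :
    G = bipGraph m n fun x y => G.Adj (inl x) (inr y) := by
  ext (x | y) (x' | y')
  · simpa using IsBip.not_adj_inl_inl hG x x'
  · simp
  · simp [G.adj_comm]
  · simpa using IsBip.not_adj_inr_inr hG y y'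

def bipGraphIso {r r' : Fin m → Fin n → Prop} (σ : Equiv.Perm (Fin m)) (τ : Equiv.Perm (Fin n))
    (h : ∀ x y, r x y ↔ r' (σ x) (τ y)) : bipGraph m n r ≃g bipGraph m n r' where
  toEquiv := Equiv.sumCongr σ τ
  map_rel_iff' := by rintro (x | y) (x' | y') <;> simp [h]

theorem IsBip.isBipartiteWith {G : SimpleGraph (Fin m ⊕ Fin n)} (hG : IsBip G) :
    G.IsBipartiteWith (univ.map .inl : Finset (Fin m ⊕ Fin n))
      (univ.map .inr : Finset (Fin m ⊕ Fin n)) where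
  disjoint := by simp [Set.disjoint_left]
  mem_of_adj := by
    rintro (x | y) (x' | y') h
    · exact (IsBip.not_adj_inl_inl hG x x' h).elim
    · simp
    · simp
    · exact (IsBip.not_adj_inr_inr hG y y' h).elim

variable {G : SimpleGraph (Fin m ⊕ Fin n)} [DecidableRel G.Adj]

theorem IsBip.ncard_edgeSet (hG : IsBip G) : G.edgeSet.ncard = ∑ x, G.degree (inl x) := by
  rw [← coe_edgeFinset, Set.ncard_coe_finset,
    ← isBipartiteWith_sum_degrees_eq_card_edges (IsBip.isBipartiteWith hG), sum_map]
  rfl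

theorem IsBip.degree_inl (hG : IsBip G) (x : Fin m) :
    G.degree (inl x) = #{y | G.Adj (inl x) (inr y)} := by
  rw [← card_neighborFinset_eq_degree,
    isBipartiteWith_neighborFinset (IsBip.isBipartiteWith hG) (by simp), filter_map, card_map]
  rfl

end Bipartite

section Extremal

open Sum

variable {m n : ℕ}

def extremalGraph (m n p : ℕ) : SimpleGraph (Fin m ⊕ Fin n) :=
  bipGraph m n fun a b => a.val < p ∨ b.val + p = a.val

theorem sum_ite_mem_univ (S : Finset (Fin m)) (a b : ℕ) :
    ∑ x, (if x ∈ S then a else b) = #S * a + (m - #S) * b := by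
  simp [sum_ite, filter_notMem_eq_sdiff, ← compl_eq_univ_sdiff, card_compl]

theorem noCherryOutside_extremalGraph (p : ℕ) :
    NoCherryOutside (extremalGraph m n p)
      ((({a | a.val < p} : Finset (Fin m)).map .inl : Finset (Fin m ⊕ Fin n)) : Set _) := by
  rintro (a | b) (a' | b') (a'' | b'') hu hv hw hvu hvw <;>
    simp_all [extremalGraph] <;> exact Fin.ext (by omega)

theorem not_containsCopy_extremalGraph {p ℓ : ℕ} (h : p < ℓ) :
    ¬ ContainsCopy (extremalGraph m n p) (linearForest fun _ : Fin ℓ => 3) := fun hc => by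
  have := le_card_of_noCherryOutside _ (noCherryOutside_extremalGraph p) hc
  simp only [card_map, Fin.card_filter_val_lt] at this
  omega

theorem extremalGraph_isBip {p : ℕ} : IsBip (extremalGraph m n p) :=
  bipGraph_isBip _

theorem ncard_edgeSet_extremalGraph {p : ℕ} (hpm : p ≤ m) (hmn : m ≤ n + p) :
    (extremalGraph m n p).edgeSet.ncard = p * n + m - p := by
  classical
  have hdeg (a : Fin m) : (extremalGraph m n p).degree (inl a) = if a.val < p then n else 1 := by
    rw [IsBip.degree_inl extremalGraph_isBip]
    split_ifs with ha
    · simp [extremalGraph, ha]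
    · refine card_eq_one.mpr ⟨⟨a.val - p, by omega⟩, ?_⟩
      ext b
      simp only [extremalGraph, bipGraph_adj_inl_inr, mem_filter_univ, mem_singleton, ha,
        false_or, Fin.ext_iff]
      omega
  obtain ⟨k, rfl⟩ := Nat.exists_eq_add_of_le hpm
  rw [IsBip.ncard_edgeSet extremalGraph_isBip, sum_congr rfl fun a _ => hdeg a,
    Fin.sum_univ_eq_sum_range (fun i => if i < p then n else 1), sum_range_add]
  simp [sum_ite_of_true]
  omega

theorem nonempty_iso_extremalGraph_of_rows {r : Fin m → Fin n → Prop} (S : Finset (Fin m))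
    (hfull : ∀ x ∈ S, ∀ y, r x y) (φ : {x // x ∉ S} → Fin n)
    (hφ : ∀ x : {x // x ∉ S}, ∀ y, r x y ↔ y = φ x) (hinj : Function.Injective φ) :
    Nonempty (bipGraph m n r ≃g extremalGraph m n #S) := by
  obtain ⟨σ, hσ⟩ := Equiv.Perm.exists_map_finset_eq S {a : Fin m | a.val < #S}
    (by simpa [Fin.card_filter_val_lt] using card_le_univ S)
  have hσS (x : Fin m) : x ∈ S ↔ (σ x).val < #S := by
    rw [← mem_map' σ.toEmbedding, hσ, mem_filter_univ]; rfl
  have hmn : m - #S ≤ n := by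
    simpa [card_compl] using Fintype.card_le_of_injective φ hinj
  let g : {x // x ∉ S} → Fin n := fun x =>
    ⟨(σ x).val - #S, by have := (hσS x).not.mp x.2; omega⟩
  have hg : Function.Injective g := by
    intro x x' h
    have := (hσS x).not.mp x.2
    have := (hσS x').not.mp x'.2
    exact Subtype.ext (σ.injective (Fin.ext (by simp [g, Fin.ext_iff] at h; omega)))
  obtain ⟨τ, hτ⟩ := Equiv.Perm.exists_extending_pair φ g hinj hg
  refine ⟨bipGraphIso σ τ fun x y => ?_⟩
  by_cases hx : x ∈ S
  · simp [hfull x hx y, (hσS x).mp hx]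
  · have := (hσS x).not.mp hx
    rw [hφ ⟨x, hx⟩, ← τ.injective.eq_iff, hτ, Fin.ext_iff]
    simp only [g]
    omega

variable {G : SimpleGraph (Fin m ⊕ Fin n)} [DecidableRel G.Adj]

theorem IsBip.degree_inl_le (hG : IsBip G) (x : Fin m) : G.degree (inl x) ≤ n := by
  simpa [IsBip.degree_inl hG] using card_filter_le (univ : Finset (Fin n)) _

theorem IsBip.ncard_edgeSet_le (hG : IsBip G) (S : Finset (Fin m)) {d : ℕ}
    (hd : ∀ x ∉ S, G.degree (inl x) ≤ d) : G.edgeSet.ncard ≤ #S * n + (m - #S) * d := by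
  rw [IsBip.ncard_edgeSet hG, ← sum_ite_mem_univ]
  refine sum_le_sum fun x _ => ?_
  split_ifs with hx
  exacts [IsBip.degree_inl_le hG x, hd x hx]

theorem IsBip.degree_inl_eq_of_ncard_edgeSet_eq (hG : IsBip G) (S : Finset (Fin m)) {d : ℕ}
    (hd : ∀ x ∉ S, G.degree (inl x) ≤ d) (hE : G.edgeSet.ncard = #S * n + (m - #S) * d) :
    (∀ x ∈ S, G.degree (inl x) = n) ∧ ∀ x ∉ S, G.degree (inl x) = d := by
  rw [IsBip.ncard_edgeSet hG, ← sum_ite_mem_univ, sum_eq_sum_iff_of_le] at hE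
  · exact ⟨fun x hx => by simpa [hx] using hE x (mem_univ x),
      fun x hx => by simpa [hx] using hE x (mem_univ x)⟩
  · intro x _
    split_ifs with hx
    exacts [IsBip.degree_inl_le hG x, hd x hx]

theorem IsBip.degree_inl_le_one (hG : IsBip G) {S : Finset (Fin m)}
    (hT : NoCherryOutside G ((S.map .inl : Finset (Fin m ⊕ Fin n)) : Set _)) {x : Fin m}
    (hx : x ∉ S) : G.degree (inl x) ≤ 1 := by
  rw [IsBip.degree_inl hG, card_le_one]
  intro y hy y' hy'
  simp only [mem_filter_univ] at hy hy'
  exact inr_injective (hT (by simp) (by simpa using hx) (by simp) hy hy')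

theorem IsBip.nonempty_iso_extremalGraph (hG : IsBip G) {S : Finset (Fin m)}
    (hT : NoCherryOutside G ((S.map .inl : Finset (Fin m ⊕ Fin n)) : Set _))
    (hfull : ∀ x ∈ S, G.degree (inl x) = n) (hone : ∀ x ∉ S, G.degree (inl x) = 1) :
    Nonempty (G ≃g extremalGraph m n #S) := by
  have hadj : ∀ x : {x // x ∉ S}, ∃ y, ∀ y', G.Adj (inl x) (inr y') ↔ y' = y := by
    intro ⟨x, hx⟩
    obtain ⟨y, hy⟩ := card_eq_one.mp ((IsBip.degree_inl hG x).symm.trans (hone x hx))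
    exact ⟨y, fun y' => by simpa using congrArg (y' ∈ ·) hy⟩
  choose φ hφ using hadj
  have hφinj : Function.Injective φ := by
    intro ⟨x, hx⟩ ⟨x', hx'⟩ h
    have := hT (by simpa using hx) (by simp) (by simpa using hx')
      (((hφ _ _).mpr rfl).symm) (((hφ _ _).mpr h).symm)
    exact Subtype.ext (inl_injective this)
  rw [IsBip.eq_bipGraph hG]
  refine nonempty_iso_extremalGraph_of_rows S (fun x hx y => ?_) φ hφ hφinj
  have := (IsBip.degree_inl hG x).symm.trans (hfull x hx)
  simpa using card_filter_eq_iff.mp (this.trans (card_fin n).symm) y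

def highDegreeLeft (G : SimpleGraph (Fin m ⊕ Fin n)) [DecidableRel G.Adj] (d : ℕ) :
    Finset (Fin m) :=
  {x | d ≤ G.degree (inl x)}

theorem card_highDegreeLeft_le (d : ℕ) : #(highDegreeLeft G d) ≤ m := by
  simpa using card_le_univ (highDegreeLeft G d)

theorem card_highDegreeLeft_lt {ℓ : ℕ}
    (hfree : ¬ ContainsCopy G (linearForest fun _ : Fin ℓ => 3)) :
    #(highDegreeLeft G (3 * ℓ)) < ℓ := by
  simpa using card_lt_of_forall_le_degree hfree ((highDegreeLeft G (3 * ℓ)).map .inl)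
    (by simp [highDegreeLeft])

theorem noCherryOutside_highDegreeLeft {ℓ : ℕ}
    (hfree : ¬ ContainsCopy G (linearForest fun _ : Fin ℓ => 3))
    (hS : #(highDegreeLeft G (3 * ℓ)) + 1 = ℓ) :
    NoCherryOutside G
      ((((highDegreeLeft G (3 * ℓ)).map .inl) : Finset (Fin m ⊕ Fin n)) : Set _) :=
  noCherryOutside_of_forall_le_degree hfree _ (by simpa using hS) (by simp [highDegreeLeft])

/-- With fewer than `ℓ - 1` heavy rows there are at most `(ℓ - 2) n + 3ℓ m` edges. -/
theorem IsBip.card_highDegreeLeft_add_one_eq {ℓ : ℕ} (hG : IsBip G)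
    (hfree : ¬ ContainsCopy G (linearForest fun _ : Fin ℓ => 3)) (hn : m * (3 * ℓ) + ℓ ≤ n)
    (hE : (ℓ - 1) * n + m - (ℓ - 1) ≤ G.edgeSet.ncard) :
    #(highDegreeLeft G (3 * ℓ)) + 1 = ℓ := by
  set S := highDegreeLeft G (3 * ℓ)
  have hlt : #S < ℓ := card_highDegreeLeft_lt hfree
  by_contra hne
  have hle := IsBip.ncard_edgeSet_le hG S (d := 3 * ℓ) fun x hx => by
    simp only [S, highDegreeLeft, mem_filter_univ, not_le] at hx
    omega
  have h1 : #S * n ≤ (ℓ - 2) * n := Nat.mul_le_mul_right _ (by omega)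
  have h2 : (m - #S) * (3 * ℓ) ≤ m * (3 * ℓ) := Nat.mul_le_mul_right _ (Nat.sub_le m #S)
  have h3 : (ℓ - 1) * n = (ℓ - 2) * n + n := by
    rw [show ℓ - 1 = ℓ - 2 + 1 by omega, add_mul, one_mul]
  omega

theorem IsBip.ncard_edgeSet_le_of_not_containsCopy {ℓ : ℕ} (hG : IsBip G)
    (hfree : ¬ ContainsCopy G (linearForest fun _ : Fin ℓ => 3)) (hn : m * (3 * ℓ) + ℓ ≤ n) :
    G.edgeSet.ncard ≤ (ℓ - 1) * n + m - (ℓ - 1) := by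
  by_contra! hE
  have hS := IsBip.card_highDegreeLeft_add_one_eq hG hfree hn hE.le
  have := IsBip.ncard_edgeSet_le hG _ fun x hx =>
    IsBip.degree_inl_le_one hG (noCherryOutside_highDegreeLeft hfree hS) hx
  have hSm := card_highDegreeLeft_le (G := G) (3 * ℓ)
  rw [show ℓ - 1 = #(highDegreeLeft G (3 * ℓ)) by omega] at hE
  omega

theorem IsBip.nonempty_iso_extremalGraph_of_ncard_edgeSet_eq {ℓ : ℕ} (hG : IsBip G)
    (hfree : ¬ ContainsCopy G (linearForest fun _ : Fin ℓ => 3))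
    (hn : m * (3 * ℓ) + ℓ ≤ n) (hE : G.edgeSet.ncard = (ℓ - 1) * n + m - (ℓ - 1)) :
    Nonempty (G ≃g extremalGraph m n (ℓ - 1)) := by
  have hS := IsBip.card_highDegreeLeft_add_one_eq hG hfree hn hE.ge
  have hT := noCherryOutside_highDegreeLeft hfree hS
  have hSm := card_highDegreeLeft_le (G := G) (3 * ℓ)
  rw [show ℓ - 1 = #(highDegreeLeft G (3 * ℓ)) by omega] at hE ⊢
  obtain ⟨hfull, hone⟩ := IsBip.degree_inl_eq_of_ncard_edgeSet_eq hG _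
    (fun x hx => IsBip.degree_inl_le_one hG hT hx) (by rw [hE]; omega)
  exact IsBip.nonempty_iso_extremalGraph hG hT hfull hone

end Extremal

theorem statement_4 (ℓ : ℕ) (hℓ : 1 ≤ ℓ) (p : ℕ) (hp : p = ℓ - 1)
    (m : ℕ) (hm : p + 1 ≤ m) :
    ∃ N : ℕ, ∀ n : ℕ, N ≤ n →
      bipEx m n (linearForest (fun _ : Fin ℓ => 3)) = p * n + m - p ∧
      ∀ G : SimpleGraph (Fin m ⊕ Fin n), IsBip G →
        ¬ ContainsCopy G (linearForest (fun _ : Fin ℓ => 3)) →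
        G.edgeSet.ncard = p * n + m - p →
        Nonempty (G ≃g bipGraph m n (fun a b => a.val < p ∨ b.val + p = a.val)) := by
  classical
  subst hp
  refine ⟨m * (3 * ℓ) + ℓ, fun n hn => ⟨IsGreatest.csSup_eq ⟨?_, ?_⟩, ?_⟩⟩
  · have hmn : m ≤ n + (ℓ - 1) := by nlinarith
    exact ⟨extremalGraph m n (ℓ - 1), extremalGraph_isBip,
      not_containsCopy_extremalGraph (by omega), ncard_edgeSet_extremalGraph (by omega) hmn⟩
  · rintro _ ⟨G, hG, hfree, rfl⟩
    exact IsBip.ncard_edgeSet_le_of_not_containsCopy hG hfree hn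
  · exact fun G hG hfree hE =>
      IsBip.nonempty_iso_extremalGraph_of_ncard_edgeSet_eq hG hfree hn hE
end

section
/- Let p ≥ 3 be an integer and let n₁, m₁ be nonnegative integers with m₁ ≤ 2p. Then ex(n₁,m₁;P₇) ≤ p·n₁ + m₁, with equality if and only if n₁ = m₁ = 0, or m₁ = 2p and n₁ = 2. -/
open SimpleGraph

/-!
Only paths `y₁ x₁ y₂ x₂ y₃ x₃ y₄` with both ends in the part `Y`, of size at most `2p`, are
needed. Induct on `|X| + |Y|`: a vertex of `Y` of degree at most `1`, or a vertex of `X` of degree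
at most `p`, can be deleted at a loss of at most `1`, resp. `p` edges. Otherwise all degrees in `X`
exceed `p ≥ 3` and all degrees in `Y` are at least `2`; then a vertex of `Y` of degree at least `3`
would be the middle of such a path, so `e ≤ 2|Y|`, which is below `p|X| + |Y|` unless `|X| = 2`
and `|Y| = 2p`. Equality after deleting a vertex of `X` forces `K_{2,2p}` plus a vertex of degree
`p`, which contains the path. Conversely `K_{2,2p}` has `4p` edges and no `P₇`, since a `P₇` in a
bipartite graph has at least three vertices on each side.
-/

open Finset

section Relation

variable {α β : Type*} (r : α → β → Prop) {s : Finset α} {t : Finset β}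

def HasYEndedP7 (s : Finset α) (t : Finset β) : Prop :=
  ∃ x₁ ∈ s, ∃ x₂ ∈ s, ∃ x₃ ∈ s, ∃ y₁ ∈ t, ∃ y₂ ∈ t, ∃ y₃ ∈ t, ∃ y₄ ∈ t,
    [x₁, x₂, x₃].Nodup ∧ [y₁, y₂, y₃, y₄].Nodup ∧
    r x₁ y₁ ∧ r x₁ y₂ ∧ r x₂ y₂ ∧ r x₂ y₃ ∧ r x₃ y₃ ∧ r x₃ y₄

variable {r} in
theorem HasYEndedP7.mono {s' : Finset α} {t' : Finset β} (h : HasYEndedP7 r s t)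
    (hs : s ⊆ s') (ht : t ⊆ t') : HasYEndedP7 r s' t' := by
  obtain ⟨x₁, hx₁, x₂, hx₂, x₃, hx₃, y₁, hy₁, y₂, hy₂, y₃, hy₃, y₄, hy₄, h⟩ := h
  exact ⟨x₁, hs hx₁, x₂, hs hx₂, x₃, hs hx₃, y₁, ht hy₁, y₂, ht hy₂, y₃, ht hy₃, y₄, ht hy₄, h⟩

variable [∀ a b, Decidable (r a b)]

def edgeCount (s : Finset α) (t : Finset β) : ℕ := ∑ a ∈ s, #(t.bipartiteAbove r a)

theorem edgeCount_empty_right (s : Finset α) : edgeCount r s (∅ : Finset β) = 0 := by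
  simp [edgeCount, bipartiteAbove]

theorem edgeCount_eq_sum_card_bipartiteBelow :
    edgeCount r s t = ∑ b ∈ t, #(s.bipartiteBelow r b) :=
  sum_card_bipartiteAbove_eq_sum_card_bipartiteBelow r

theorem edgeCount_eq_erase_left_add [DecidableEq α] {a : α} (ha : a ∈ s) :
    edgeCount r s t = edgeCount r (s.erase a) t + #(t.bipartiteAbove r a) :=
  (sum_erase_add _ _ ha).symm

theorem edgeCount_eq_erase_right_add [DecidableEq β] {b : β} (hb : b ∈ t) :
    edgeCount r s t = edgeCount r s (t.erase b) + #(s.bipartiteBelow r b) := by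
  simp only [edgeCount_eq_sum_card_bipartiteBelow]
  exact (sum_erase_add _ _ hb).symm

theorem edgeCount_le_card_mul_card : edgeCount r s t ≤ #s * #t := by
  simpa [edgeCount] using sum_le_card_nsmul s (fun a ↦ #(t.bipartiteAbove r a)) #t
    fun a _ ↦ card_filter_le t (r a)

theorem edgeCount_le_card_mul_of_card_bipartiteBelow_le {d : ℕ}
    (hd : ∀ b ∈ t, #(s.bipartiteBelow r b) ≤ d) : edgeCount r s t ≤ #t * d := by
  rw [edgeCount_eq_sum_card_bipartiteBelow]
  simpa using sum_le_card_nsmul t _ d hd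

theorem edgeCount_eq_card_mul_card_of_forall (h : ∀ a ∈ s, ∀ b ∈ t, r a b) :
    edgeCount r s t = #s * #t := by
  rw [edgeCount, sum_const_nat fun a ha ↦ ?_]
  exact congrArg card (filter_true_of_mem (h a ha))

theorem rel_of_edgeCount_eq_card_mul_card (h : edgeCount r s t = #s * #t) {a : α} {b : β}
    (ha : a ∈ s) (hb : b ∈ t) : r a b := by
  by_contra hab
  have hlt : #(t.bipartiteAbove r a) < #t := card_lt_card (filter_ssubset.2 ⟨b, hb, hab⟩)
  have : edgeCount r s t < ∑ _a ∈ s, #t :=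
    sum_lt_sum (fun a _ ↦ card_filter_le t (r a)) ⟨a, ha, hlt⟩
  simp [h] at this

theorem hasYEndedP7_of_forall_rel_erase [DecidableEq α] {a : α} (ha : a ∈ s) (hs : 3 ≤ #s)
    (ht : 4 ≤ #t) (hrel : ∀ x ∈ s.erase a, ∀ y ∈ t, r x y)
    (hdeg : 2 ≤ #(t.bipartiteAbove r a)) : HasYEndedP7 r s t := by
  classical
  obtain ⟨x, hx, x', hx', hxx'⟩ := one_lt_card.1 (by rw [card_erase_of_mem ha]; omega)
  obtain ⟨y₁, hy₁, y₂, hy₂, hy₁₂⟩ := one_lt_card.1 hdeg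
  obtain ⟨y₃, hy₃, hy₃'⟩ := exists_mem_notMem_of_card_lt_card (s := {y₁, y₂}) (t := t)
    (by have := card_le_two (a := y₁) (b := y₂); omega)
  obtain ⟨y₄, hy₄, hy₄'⟩ := exists_mem_notMem_of_card_lt_card (s := {y₁, y₂, y₃}) (t := t)
    (by have := card_le_three (a := y₁) (b := y₂) (c := y₃); omega)
  rw [mem_bipartiteAbove] at hy₁ hy₂
  refine ⟨x, mem_of_mem_erase hx, a, ha, x', mem_of_mem_erase hx', y₃, hy₃, y₁, hy₁.1,
    y₂, hy₂.1, y₄, hy₄, ?_, ?_, hrel x hx y₃ hy₃, hrel x hx y₁ hy₁.1, hy₁.2, hy₂.2,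
    hrel x' hx' y₂ hy₂.1, hrel x' hx' y₄ hy₄⟩ <;> grind

theorem card_bipartiteBelow_le_two [DecidableEq β] (hP : ¬HasYEndedP7 r s t)
    (hs : ∀ a ∈ s, 4 ≤ #(t.bipartiteAbove r a)) (ht : ∀ b ∈ t, 2 ≤ #(s.bipartiteBelow r b))
    {y₀ : β} (hy₀ : y₀ ∈ t) : #(s.bipartiteBelow r y₀) ≤ 2 := by
  by_contra! h
  obtain ⟨x₁, x₂, x₃, hx₁, hx₂, hx₃, h₁₂, h₁₃, h₂₃⟩ := two_lt_card_iff.1 h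
  rw [mem_bipartiteBelow] at hx₁ hx₂ hx₃
  obtain ⟨y₁, hy₁, hy₁'⟩ := exists_mem_notMem_of_card_lt_card (s := {y₀})
    (t := t.bipartiteAbove r x₁) (by have := hs x₁ hx₁.1; simp; omega)
  obtain ⟨y₂, hy₂, hy₂'⟩ := exists_mem_notMem_of_card_lt_card (s := {y₀, y₁})
    (t := t.bipartiteAbove r x₂)
    (by have := hs x₂ hx₂.1; have := card_le_two (a := y₀) (b := y₁); omega)
  obtain ⟨y₃, hy₃, hy₃'⟩ := exists_mem_notMem_of_card_lt_card (s := {y₀, y₁, y₂})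
    (t := t.bipartiteAbove r x₃)
    (by have := hs x₃ hx₃.1; have := card_le_three (a := y₀) (b := y₁) (c := y₂); omega)
  rw [mem_bipartiteAbove] at hy₁ hy₂ hy₃
  obtain ⟨u, hu, hu'⟩ := exists_mem_notMem_of_card_lt_card (s := {x₁})
    (t := s.bipartiteBelow r y₁) (by have := ht y₁ hy₁.1; simp; omega)
  rw [mem_bipartiteBelow] at hu
  apply hP
  by_cases hu₂ : u = x₂
  · subst hu₂
    refine ⟨x₃, hx₃.1, x₁, hx₁.1, u, hu.1, y₃, hy₃.1, y₀, hy₀, y₁, hy₁.1, y₂, hy₂.1, ?_, ?_,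
      hy₃.2, hx₃.2, hx₁.2, hy₁.2, hu.2, hy₂.2⟩ <;> grind
  by_cases hu₃ : u = x₃
  · subst hu₃
    refine ⟨x₂, hx₂.1, x₁, hx₁.1, u, hu.1, y₂, hy₂.1, y₀, hy₀, y₁, hy₁.1, y₃, hy₃.1, ?_, ?_,
      hy₂.2, hx₂.2, hx₁.2, hy₁.2, hu.2, hy₃.2⟩ <;> grind
  obtain ⟨y', hy', hy''⟩ := exists_mem_notMem_of_card_lt_card (s := {y₁, y₀, y₂})
    (t := t.bipartiteAbove r u)
    (by have := hs u hu.1; have := card_le_three (a := y₁) (b := y₀) (c := y₂); omega)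
  rw [mem_bipartiteAbove] at hy'
  refine ⟨u, hu.1, x₁, hx₁.1, x₂, hx₂.1, y', hy'.1, y₁, hy₁.1, y₀, hy₀, y₂, hy₂.1, ?_, ?_,
    hy'.2, hu.2, hy₁.2, hx₁.2, hx₂.2, hy₂.2⟩ <;> grind

theorem edgeCount_le_of_card_bipartiteBelow_le_two {q : ℕ} (hq : 3 ≤ q) (ht : #t ≤ 2 * q)
    (hs : s.Nonempty) (hdegs : ∀ a ∈ s, q < #(t.bipartiteAbove r a))
    (hdegt : ∀ b ∈ t, #(s.bipartiteBelow r b) ≤ 2) :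
    edgeCount r s t ≤ q * #s + #t ∧ (edgeCount r s t = q * #s + #t → #t = 2 * q ∧ #s = 2) := by
  obtain ⟨a, ha⟩ := hs
  have hqt : q < #t := (hdegs a ha).trans_le (card_filter_le _ _)
  have h2t := edgeCount_le_card_mul_of_card_bipartiteBelow_le r hdegt
  have hst := edgeCount_le_card_mul_card r (s := s) (t := t)
  have hs1 : 1 ≤ #s := card_pos.2 ⟨a, ha⟩
  rcases (by omega : #s = 1 ∨ #s = 2 ∨ 3 ≤ #s) with h | h | h
  · rw [h] at hst ⊢; omega
  · rw [h]; omega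
  · have : q * 3 ≤ q * #s := Nat.mul_le_mul_left q h
    omega

theorem edgeCount_le_of_not_hasYEndedP7 {q : ℕ} (hq : 3 ≤ q) (ht : #t ≤ 2 * q)
    (hP : ¬HasYEndedP7 r s t) :
    edgeCount r s t ≤ q * #s + #t ∧
      (edgeCount r s t = q * #s + #t → (#s = 0 ∧ #t = 0) ∨ (#t = 2 * q ∧ #s = 2)) := by
  classical
  induction hn : #s + #t using Nat.strong_induction_on generalizing s t with
  | _ n ih =>
  rcases t.eq_empty_or_nonempty with rfl | htne
  · rw [edgeCount_empty_right, card_empty, add_zero]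
    refine ⟨Nat.zero_le _, fun h ↦ Or.inl ⟨?_, rfl⟩⟩
    exact (Nat.mul_eq_zero.1 h.symm).resolve_left (by omega)
  rcases s.eq_empty_or_nonempty with rfl | hsne
  · rw [edgeCount, sum_empty, card_empty, mul_zero, zero_add]
    exact ⟨Nat.zero_le _, fun h ↦ absurd h htne.card_pos.ne⟩
  by_cases hlow_t : ∃ b ∈ t, #(s.bipartiteBelow r b) ≤ 1
  · obtain ⟨b, hb, hdeg⟩ := hlow_t
    have hcard := card_erase_add_one hb
    obtain ⟨hle, heq⟩ := ih _ (by omega) (by omega)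
      (fun h ↦ hP (h.mono subset_rfl (erase_subset b t))) rfl
    rw [edgeCount_eq_erase_right_add r hb]
    refine ⟨by omega, fun h ↦ ?_⟩
    have := heq (by omega)
    have := hsne.card_pos
    omega
  by_cases hlow_s : ∃ a ∈ s, #(t.bipartiteAbove r a) ≤ q
  · obtain ⟨a, ha, hdeg⟩ := hlow_s
    have hcard := card_erase_add_one ha
    obtain ⟨hle, heq⟩ := ih _ (by omega) ht
      (fun h ↦ hP (h.mono (erase_subset a s) subset_rfl)) rfl
    rw [edgeCount_eq_erase_left_add r ha, ← hcard, mul_add_one]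
    refine ⟨by omega, fun h ↦ ?_⟩
    have hc : edgeCount r (s.erase a) t = q * #(s.erase a) + #t := by omega
    rcases heq hc with ⟨-, h0⟩ | ⟨h2q, h2⟩
    · exact absurd h0 htne.card_pos.ne'
    · refine absurd (hasYEndedP7_of_forall_rel_erase r ha (by omega) (by omega)
        (fun x hx y hy ↦ rel_of_edgeCount_eq_card_mul_card r ?_ hx hy) (by omega)) hP
      rw [hc, h2, h2q]
      ring
  push Not at hlow_t hlow_s
  have := edgeCount_le_of_card_bipartiteBelow_le_two r hq ht hsne hlow_s
    (fun b hb ↦ card_bipartiteBelow_le_two r hP (fun a ha ↦ by have := hlow_s a ha; omega)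
      hlow_t hb)
  exact ⟨this.1, fun h ↦ Or.inr (this.2 h)⟩

end Relation

section Graph

open Sum

variable {m n : ℕ}

theorem IsBip.ncard_edgeSet_s11 {G : SimpleGraph (Fin m ⊕ Fin n)} [DecidableRel G.Adj]
    (hG : IsBip G) : G.edgeSet.ncard = edgeCount (fun i j ↦ G.Adj (inl i) (inr j)) univ univ := by
  have hdeg (v) : G.degree v = ∑ w, if G.Adj v w then 1 else 0 := by
    rw [← card_neighborFinset_eq_degree, neighborFinset_eq_filter, card_filter]
  have hll (i i' : Fin m) : ¬G.Adj (inl i) (inl i') := fun h ↦ hG _ _ h rfl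
  have hrr (j j' : Fin n) : ¬G.Adj (inr j) (inr j') := fun h ↦ hG _ _ h rfl
  have hsum := G.sum_degrees_eq_twice_card_edges
  simp only [hdeg, Fintype.sum_sum_type, hll, hrr, if_false, sum_const_zero, add_zero,
    zero_add] at hsum
  rw [sum_comm (s := univ) (t := univ) (f := fun j i ↦ if G.Adj (inr j) (inl i) then 1 else 0)]
    at hsum
  simp only [G.adj_comm (inr _)] at hsum
  rw [← coe_edgeFinset, Set.ncard_coe_finset, edgeCount]
  simp only [bipartiteAbove, card_filter]
  omega

theorem containsCopy_pathG_seven_of_hasYEndedP7 {α β : Type*} {G : SimpleGraph (α ⊕ β)}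
    {s : Finset α} {t : Finset β} (h : HasYEndedP7 (fun i j ↦ G.Adj (inl i) (inr j)) s t) :
    ContainsCopy G (pathG 7) := by
  obtain ⟨x₁, -, x₂, -, x₃, -, y₁, -, y₂, -, y₃, -, y₄, -, hx, hy, h₁, h₂, h₃, h₄, h₅, h₆⟩ := h
  refine ⟨![inr y₁, inl x₁, inr y₂, inl x₂, inr y₃, inl x₃, inr y₄], fun u v huv ↦ ?_,
    fun u v huv ↦ ?_⟩
  · fin_cases u <;> fin_cases v <;> simp_all
  · fin_cases u <;> fin_cases v <;> simp_all [pathG, G.adj_comm (inr _)]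

theorem IsBip.not_containsCopy_pathG_seven {G : SimpleGraph (Fin 2 ⊕ Fin n)} (hG : IsBip G) :
    ¬ContainsCopy G (pathG 7) := by
  rintro ⟨f, hf, hadj⟩
  have hleft (k : Fin 3) : ∃ j : Fin 7, j.val / 2 = k.val ∧ (f j).isLeft := by
    have hk := hG _ _ (hadj (a := ⟨2 * k, by omega⟩) (b := ⟨2 * k + 1, by omega⟩) (Or.inl rfl))
    by_cases h : (f ⟨2 * k, by omega⟩).isLeft
    · exact ⟨_, by simp, h⟩
    · exact ⟨⟨2 * k + 1, by omega⟩, by simp; omega, by simpa [h] using hk⟩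
  choose idx hidx hidxLeft using hleft
  have := card_le_card_of_injOn (fun k ↦ f (idx k)) (s := univ) (t := univ.map .inl)
    (fun k _ ↦ by
      obtain ⟨i, hi⟩ := isLeft_iff.1 (hidxLeft k)
      simp [hi])
    (fun k _ k' _ hkk' ↦ Fin.ext (by rw [← hidx, ← hidx, hf hkk']))
  simp at this

theorem isBip_completeBipartiteGraph (m n : ℕ) :
    IsBip (completeBipartiteGraph (Fin m) (Fin n)) := by
  rintro (i | j) (i' | j') h <;> simp_all

end Graph

section BipEx

variable {m n : ℕ} {β : Type*} {H : SimpleGraph β}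

theorem bipEx_le {N : ℕ}
    (h : ∀ G : SimpleGraph (Fin m ⊕ Fin n), IsBip G → ¬ContainsCopy G H → G.edgeSet.ncard ≤ N) :
    bipEx m n H ≤ N :=
  csSup_le' <| by
    rintro _ ⟨G, hG, hH, rfl⟩
    exact h G hG hH

theorem bddAbove_setOf_ncard_edgeSet :
    BddAbove {e | ∃ G : SimpleGraph (Fin m ⊕ Fin n), IsBip G ∧ ¬ContainsCopy G H ∧
      G.edgeSet.ncard = e} := by
  refine ⟨Nat.card (Sym2 (Fin m ⊕ Fin n)), ?_⟩
  rintro _ ⟨G, -, -, rfl⟩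
  exact Set.ncard_le_card _

theorem le_bipEx {G : SimpleGraph (Fin m ⊕ Fin n)} (hG : IsBip G) (hH : ¬ContainsCopy G H) :
    G.edgeSet.ncard ≤ bipEx m n H :=
  le_csSup bddAbove_setOf_ncard_edgeSet ⟨G, hG, hH, rfl⟩

theorem exists_ncard_edgeSet_eq_bipEx
    (h : ∃ G : SimpleGraph (Fin m ⊕ Fin n), IsBip G ∧ ¬ContainsCopy G H) :
    ∃ G : SimpleGraph (Fin m ⊕ Fin n), IsBip G ∧ ¬ContainsCopy G H ∧
      G.edgeSet.ncard = bipEx m n H := by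
  obtain ⟨G, hG, hH⟩ := h
  refine (Nat.sSup_mem ?_ (bddAbove_setOf_ncard_edgeSet (m := m) (n := n) (H := H)) :)
  exact ⟨_, G, hG, hH, rfl⟩

end BipEx

theorem statement_11 (p n₁ m₁ : ℕ) (hp : 3 ≤ p) (hm : m₁ ≤ 2 * p) :
    bipEx n₁ m₁ (pathG 7) ≤ p * n₁ + m₁ ∧
    (bipEx n₁ m₁ (pathG 7) = p * n₁ + m₁ ↔
      (n₁ = 0 ∧ m₁ = 0) ∨ (m₁ = 2 * p ∧ n₁ = 2)) := by
  classical
  have hbound (G : SimpleGraph (Fin n₁ ⊕ Fin m₁)) (hG : IsBip G)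
      (hfree : ¬ContainsCopy G (pathG 7)) : G.edgeSet.ncard ≤ p * n₁ + m₁ ∧
        (G.edgeSet.ncard = p * n₁ + m₁ → (n₁ = 0 ∧ m₁ = 0) ∨ (m₁ = 2 * p ∧ n₁ = 2)) := by
    rw [hG.ncard_edgeSet_s11]
    simpa using edgeCount_le_of_not_hasYEndedP7 _ hp (s := univ) (t := univ) (by simpa using hm)
      fun h ↦ hfree (containsCopy_pathG_seven_of_hasYEndedP7 h)
  have hle : bipEx n₁ m₁ (pathG 7) ≤ p * n₁ + m₁ :=
    bipEx_le fun G hG hfree ↦ (hbound G hG hfree).1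
  refine ⟨hle, fun heq ↦ ?_, ?_⟩
  · obtain ⟨G, hG, hfree, hcard⟩ := exists_ncard_edgeSet_eq_bipEx (H := pathG 7)
      ⟨⊥, fun _ _ h ↦ h.elim, by rintro ⟨f, -, hf⟩; exact hf (a := 0) (b := 1) (Or.inl rfl)⟩
    exact (hbound G hG hfree).2 (hcard.trans heq)
  rintro (⟨rfl, rfl⟩ | ⟨rfl, rfl⟩)
  · exact Nat.le_zero.1 hle
  have hK := isBip_completeBipartiteGraph 2 (2 * p)
  refine le_antisymm hle ?_
  calc p * 2 + 2 * p = #(univ : Finset (Fin 2)) * #(univ : Finset (Fin (2 * p))) := by simp; ring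
    _ = (completeBipartiteGraph (Fin 2) (Fin (2 * p))).edgeSet.ncard := by
      rw [hK.ncard_edgeSet_s11, edgeCount_eq_card_mul_card_of_forall _ fun _ _ _ _ ↦ by simp]
    _ ≤ _ := le_bipEx hK hK.not_containsCopy_pathG_seven
end

section
/- Let p ≥ 3 and m ≥ 3p+1 be integers, and let n₁, m₁ be nonnegative integers with m₁ ≤ m − p. Then ex(n₁,m₁;P₇) ≤ p·(n₁ − 2) + m − p + m₁, with equality if and only if n₁ = 2 and m₁ = m − p. -/
/-!
Record a bipartite graph by its adjacency relation `r` between the two parts. A `P₇` alternates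
between the parts and has both ends in the same part, so `P₇`-freeness means that neither `r` nor
`swap r` contains a path `x₁ y₁ x₂ y₂ x₃ y₃ x₄`.

Every nonempty such graph with parts `A`, `B` has at most `2(|A| + |B|) - 3` edges. Induct on
`|A| + |B|`: delete a vertex of degree at most 2; if all degrees are at least 3, a greedily built
`P₆` closes up into a hexagon none of whose vertices has a neighbour outside it (that neighbour
would extend a `P₆` along the hexagon to a `P₇`), so the hexagon spans an isolated `K_{3,3}`, and
removing it costs 9 edges and 6 vertices. With parts of sizes `a = 3` and `b ≥ 4` there are at
most `2b + 2` edges, and `K_{2,b}` is `P₇`-free because a `P₇` has three vertices in each part.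
Since `p ≥ 3`, `m ≥ 3p + 1` and `b ≤ m - p`, these bounds lie below `p(a - 2) + m - p + b`
except for `K_{2,m-p}`, which attains it.
-/

open SimpleGraph

open Finset Function

theorem Finset.exists_mem_ne_ne {γ : Type*} [DecidableEq γ] {s : Finset γ} (hs : 3 ≤ #s)
    (a b : γ) : ∃ c ∈ s, c ≠ a ∧ c ≠ b := by
  obtain ⟨c, hc, hab⟩ := exists_mem_notMem_of_card_lt_card
    ((card_le_two (a := a) (b := b)).trans_lt hs)
  simp only [mem_insert, mem_singleton, not_or] at hab
  exact ⟨c, hc, hab⟩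

theorem Finset.eq_of_subset_of_three_le {γ : Type*} [DecidableEq γ] {s : Finset γ} {a b c : γ}
    (hs : s ⊆ {a, b, c}) (h : 3 ≤ #s) : s = {a, b, c} :=
  eq_of_subset_of_card_le hs (card_le_three.trans h)

namespace BipartitePath

variable {α β : Type*} (r : α → β → Prop)

def IsPath6 (x₁ : α) (y₁ : β) (x₂ : α) (y₂ : β) (x₃ : α) (y₃ : β) : Prop :=
  x₁ ≠ x₂ ∧ x₁ ≠ x₃ ∧ x₂ ≠ x₃ ∧ y₁ ≠ y₂ ∧ y₁ ≠ y₃ ∧ y₂ ≠ y₃ ∧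
    r x₁ y₁ ∧ r x₂ y₁ ∧ r x₂ y₂ ∧ r x₃ y₂ ∧ r x₃ y₃

/-- A `P₇` whose two ends lie in `α`; `HasPath7 (swap r)` is a `P₇` with both ends in `β`. -/
def HasPath7 : Prop :=
  ∃ x₁ y₁ x₂ y₂ x₃ y₃ x₄, IsPath6 r x₁ y₁ x₂ y₂ x₃ y₃ ∧ x₄ ≠ x₁ ∧ x₄ ≠ x₂ ∧ x₄ ≠ x₃ ∧ r x₄ y₃

def IsHexagon (x₁ : α) (y₁ : β) (x₂ : α) (y₂ : β) (x₃ : α) (y₃ : β) : Prop :=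
  IsPath6 r x₁ y₁ x₂ y₂ x₃ y₃ ∧ r x₁ y₃

variable {r} {x x₁ x₂ x₃ : α} {y y₁ y₂ y₃ : β}

theorem IsPath6.reverse (h : IsPath6 r x₁ y₁ x₂ y₂ x₃ y₃) :
    IsPath6 (swap r) y₃ x₃ y₂ x₂ y₁ x₁ := by
  obtain ⟨h₁₂, h₁₃, h₂₃, k₁₂, k₁₃, k₂₃, e₁, e₂, e₃, e₄, e₅⟩ := h
  exact ⟨k₂₃.symm, k₁₃.symm, k₁₂.symm, h₂₃.symm, h₁₃.symm, h₁₂.symm, e₅, e₄, e₃, e₂, e₁⟩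

theorem IsPath6.eq_of_adj_last (h : IsPath6 r x₁ y₁ x₂ y₂ x₃ y₃) (hr : ¬HasPath7 r)
    (hx : r x y₃) : x = x₁ ∨ x = x₂ ∨ x = x₃ := by
  by_contra! hne
  exact hr ⟨x₁, y₁, x₂, y₂, x₃, y₃, x, h, hne.1, hne.2.1, hne.2.2, hx⟩

theorem IsPath6.eq_of_adj_first (h : IsPath6 r x₁ y₁ x₂ y₂ x₃ y₃) (hr : ¬HasPath7 (swap r))
    (hy : r x₁ y) : y = y₁ ∨ y = y₂ ∨ y = y₃ := by
  have := h.reverse.eq_of_adj_last hr hy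
  tauto

theorem IsHexagon.rotate (h : IsHexagon r x₁ y₁ x₂ y₂ x₃ y₃) :
    IsHexagon r x₂ y₂ x₃ y₃ x₁ y₁ := by
  obtain ⟨⟨h₁₂, h₁₃, h₂₃, k₁₂, k₁₃, k₂₃, e₁, e₂, e₃, e₄, e₅⟩, e₆⟩ := h
  exact ⟨⟨h₂₃, h₁₂.symm, h₁₃.symm, k₂₃, k₁₂.symm, k₁₃.symm, e₃, e₄, e₅, e₆, e₁⟩, e₂⟩

theorem IsHexagon.mem_of_adj_left [DecidableEq α] [DecidableEq β]
    (h : IsHexagon r x₁ y₁ x₂ y₂ x₃ y₃) (hr : ¬HasPath7 (swap r))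
    (hx : x ∈ ({x₁, x₂, x₃} : Finset α)) (hxy : r x y) : y ∈ ({y₁, y₂, y₃} : Finset β) := by
  simp only [mem_insert, mem_singleton] at hx ⊢
  rcases hx with rfl | rfl | rfl
  · exact h.1.eq_of_adj_first hr hxy
  · have := h.rotate.1.eq_of_adj_first hr hxy
    tauto
  · have := h.rotate.rotate.1.eq_of_adj_first hr hxy
    tauto

theorem IsHexagon.mem_of_adj_right [DecidableEq α] [DecidableEq β]
    (h : IsHexagon r x₁ y₁ x₂ y₂ x₃ y₃) (hr : ¬HasPath7 r)
    (hy : y ∈ ({y₁, y₂, y₃} : Finset β)) (hxy : r x y) : x ∈ ({x₁, x₂, x₃} : Finset α) := by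
  simp only [mem_insert, mem_singleton] at hy ⊢
  rcases hy with rfl | rfl | rfl
  · have := h.rotate.1.eq_of_adj_last hr hxy
    tauto
  · have := h.rotate.rotate.1.eq_of_adj_last hr hxy
    tauto
  · exact h.1.eq_of_adj_last hr hxy

theorem hasPath7_swap_of_card_eq_three [DecidableEq α] {A : Finset α} {t₁ t₂ t₃ b : β}
    (hA : #A = 3) (ht : ∀ a ∈ A, r a t₁ ∧ r a t₂ ∧ r a t₃)
    (h₁₂ : t₁ ≠ t₂) (h₁₃ : t₁ ≠ t₃) (h₂₃ : t₂ ≠ t₃) (hb : b ≠ t₁ ∧ b ≠ t₂ ∧ b ≠ t₃) {w : α} (hw : w ∈ A) (hwb : r w b) :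
    HasPath7 (swap r) := by
  obtain ⟨w', w'', hw'w'', hA'⟩ := card_eq_two.1 (by rw [card_erase_of_mem hw, hA] :
    #(A.erase w) = 2)
  have hw' : w' ∈ A.erase w := by simp [hA']
  have hw'' : w'' ∈ A.erase w := by simp [hA']
  obtain ⟨hw'w, hw'A⟩ := mem_erase.1 hw'
  obtain ⟨hw''w, hw''A⟩ := mem_erase.1 hw''
  exact ⟨b, w, t₁, w', t₂, w'', t₃, ⟨hb.1, hb.2.1, h₁₂, hw'w.symm, hw''w.symm, hw'w'', hwb,
    (ht w hw).1, (ht w' hw'A).1, (ht w' hw'A).2.1, (ht w'' hw''A).2.1⟩,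
    hb.2.2.symm, h₁₃.symm, h₂₃.symm, (ht w'' hw''A).2.2⟩

section Counting

variable [DecidableRel r] {A : Finset α} {B : Finset β}

variable (r) in
def edgeCount (A : Finset α) (B : Finset β) : ℕ := ∑ a ∈ A, #(B.bipartiteAbove r a)

theorem edgeCount_swap : edgeCount (swap r) B A = edgeCount r A B :=
  (sum_card_bipartiteAbove_eq_sum_card_bipartiteBelow r).symm

theorem edgeCount_le_card_mul : edgeCount r A B ≤ #A * #B := by
  simpa [edgeCount] using sum_le_card_nsmul A (fun a => #(B.bipartiteAbove r a)) #B
    fun a _ => card_filter_le B (r a)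

theorem edgeCount_eq_add_erase [DecidableEq α] {a : α} (ha : a ∈ A) :
    edgeCount r A B = #(B.bipartiteAbove r a) + edgeCount r (A.erase a) B :=
  (add_sum_erase A _ ha).symm

theorem edgeCount_eq_add_sdiff [DecidableEq α] [DecidableEq β] {X : Finset α} {Y : Finset β}
    (hX : X ⊆ A) (hY : Y ⊆ B) (hXY : ∀ x ∈ X, ∀ y, r x y ↔ y ∈ Y)
    (hYX : ∀ y ∈ Y, ∀ x, r x y → x ∈ X) :
    edgeCount r A B = #X * #Y + edgeCount r (A \ X) (B \ Y) := by
  have inside : ∀ x ∈ X, B.bipartiteAbove r x = Y := fun x hx => by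
    ext y
    rw [mem_bipartiteAbove, hXY x hx]
    exact ⟨And.right, fun hy => ⟨hY hy, hy⟩⟩
  have outside : ∀ x ∈ A \ X, B.bipartiteAbove r x = (B \ Y).bipartiteAbove r x := fun x hx => by
    ext y
    simp only [mem_bipartiteAbove, mem_sdiff]
    exact ⟨fun ⟨hyB, hxy⟩ => ⟨⟨hyB, fun hy => (mem_sdiff.1 hx).2 (hYX y hy x hxy)⟩, hxy⟩,
      fun ⟨⟨hyB, _⟩, hxy⟩ => ⟨hyB, hxy⟩⟩
  rw [edgeCount, edgeCount, ← sum_sdiff hX, add_comm,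
    sum_congr rfl fun x hx => congrArg card (inside x hx),
    sum_congr rfl fun x hx => congrArg card (outside x hx), sum_const, smul_eq_mul]

theorem exists_isPath6 [DecidableEq α] [DecidableEq β]
    (hA : ∀ a ∈ A, 3 ≤ #(B.bipartiteAbove r a)) (hB : ∀ b ∈ B, 3 ≤ #(A.bipartiteBelow r b))
    {x₁ : α} (hx₁ : x₁ ∈ A) :
    ∃ y₁ x₂ y₂ x₃ y₃, IsPath6 r x₁ y₁ x₂ y₂ x₃ y₃ ∧
      y₁ ∈ B ∧ x₂ ∈ A ∧ y₂ ∈ B ∧ x₃ ∈ A ∧ y₃ ∈ B := by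
  obtain ⟨y₁, hy₁⟩ := card_pos.1 (zero_lt_three.trans_le (hA x₁ hx₁))
  rw [mem_bipartiteAbove] at hy₁
  obtain ⟨x₂, hx₂, h₁₂, -⟩ := exists_mem_ne_ne (hB y₁ hy₁.1) x₁ x₁
  rw [mem_bipartiteBelow] at hx₂
  obtain ⟨y₂, hy₂, k₁₂, -⟩ := exists_mem_ne_ne (hA x₂ hx₂.1) y₁ y₁
  rw [mem_bipartiteAbove] at hy₂
  obtain ⟨x₃, hx₃, h₁₃, h₂₃⟩ := exists_mem_ne_ne (hB y₂ hy₂.1) x₁ x₂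
  rw [mem_bipartiteBelow] at hx₃
  obtain ⟨y₃, hy₃, k₁₃, k₂₃⟩ := exists_mem_ne_ne (hA x₃ hx₃.1) y₁ y₂
  rw [mem_bipartiteAbove] at hy₃
  exact ⟨y₁, x₂, y₂, x₃, y₃, ⟨h₁₂.symm, h₁₃.symm, h₂₃.symm, k₁₂.symm, k₁₃.symm, k₂₃.symm,
    hy₁.2, hx₂.2, hy₂.2, hx₃.2, hy₃.2⟩, hy₁.1, hx₂.1, hy₂.1, hx₃.1, hy₃.1⟩

theorem exists_isolated_K33 [DecidableEq α] [DecidableEq β]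
    (hr : ¬HasPath7 r) (hr' : ¬HasPath7 (swap r))
    (hA : ∀ a ∈ A, 3 ≤ #(B.bipartiteAbove r a)) (hB : ∀ b ∈ B, 3 ≤ #(A.bipartiteBelow r b))
    (hne : A.Nonempty) :
    ∃ X ⊆ A, ∃ Y ⊆ B, #X = 3 ∧ #Y = 3 ∧
      (∀ x ∈ X, ∀ y, r x y ↔ y ∈ Y) ∧ (∀ y ∈ Y, ∀ x, r x y → x ∈ X) := by
  obtain ⟨x₁, hx₁⟩ := hne
  obtain ⟨y₁, x₂, y₂, x₃, y₃, hP, hy₁, hx₂, hy₂, hx₃, hy₃⟩ := exists_isPath6 hA hB hx₁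
  have hx₁y₃ : r x₁ y₃ := by
    have hN : B.bipartiteAbove r x₁ = {y₁, y₂, y₃} := by
      refine eq_of_subset_of_three_le (fun y hy => ?_) (hA x₁ hx₁)
      simpa using hP.eq_of_adj_first hr' ((mem_bipartiteAbove r).1 hy).2
    exact ((mem_bipartiteAbove r).1 (hN ▸ by simp : y₃ ∈ B.bipartiteAbove r x₁)).2
  have hH : IsHexagon r x₁ y₁ x₂ y₂ x₃ y₃ := ⟨hP, hx₁y₃⟩
  obtain ⟨h₁₂, h₁₃, h₂₃, k₁₂, k₁₃, k₂₃, -⟩ := hP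
  have hXA : ({x₁, x₂, x₃} : Finset α) ⊆ A := by simp [insert_subset_iff, *]
  refine ⟨_, hXA, {y₁, y₂, y₃}, by simp [insert_subset_iff, *], card_eq_three.2
    ⟨_, _, _, h₁₂, h₁₃, h₂₃, rfl⟩, card_eq_three.2 ⟨_, _, _, k₁₂, k₁₃, k₂₃, rfl⟩,
    fun x hx y => ⟨hH.mem_of_adj_left hr' hx, fun hy => ?_⟩,
    fun y hy x => hH.mem_of_adj_right hr hy⟩
  have hN : B.bipartiteAbove r x = {y₁, y₂, y₃} :=
    eq_of_subset_of_three_le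
      (fun y hy => hH.mem_of_adj_left hr' hx ((mem_bipartiteAbove r).1 hy).2) (hA x (hXA hx))
  exact ((mem_bipartiteAbove r).1 (hN ▸ hy)).2

theorem edgeCount_add_three_le_of_erase [DecidableEq α] {a : α} (ha : a ∈ A)
    (hdeg : #(B.bipartiteAbove r a) ≤ 2) (hpos : 0 < edgeCount r A B)
    (ih : 0 < edgeCount r (A.erase a) B →
      edgeCount r (A.erase a) B + 3 ≤ 2 * (#(A.erase a) + #B)) :
    edgeCount r A B + 3 ≤ 2 * (#A + #B) := by
  have hdegB : #(B.bipartiteAbove r a) ≤ #B := card_filter_le _ _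
  have hA := card_erase_add_one ha
  rw [edgeCount_eq_add_erase ha] at hpos ⊢
  rcases (edgeCount r (A.erase a) B).eq_zero_or_pos with h0 | h0
  · omega
  · have := ih h0
    omega

theorem edgeCount_add_three_le [DecidableEq α] [DecidableEq β]
    (hr : ¬HasPath7 r) (hr' : ¬HasPath7 (swap r)) (A : Finset α) (B : Finset β)
    (hpos : 0 < edgeCount r A B) : edgeCount r A B + 3 ≤ 2 * (#A + #B) := by
  induction hn : #A + #B using Nat.strong_induction_on generalizing A B with
  | _ n ih =>
  subst hn
  by_cases hlowA : ∃ a ∈ A, #(B.bipartiteAbove r a) ≤ 2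
  · obtain ⟨a, ha, hdeg⟩ := hlowA
    exact edgeCount_add_three_le_of_erase ha hdeg hpos fun h =>
      ih _ (by have := card_erase_add_one ha; omega) _ _ h rfl
  by_cases hlowB : ∃ b ∈ B, #(A.bipartiteBelow r b) ≤ 2
  · obtain ⟨b, hb, hdeg⟩ := hlowB
    have := edgeCount_add_three_le_of_erase (r := swap r) (A := B) (B := A) hb hdeg
      (by rwa [edgeCount_swap]) fun h => by
        rw [edgeCount_swap] at h ⊢
        have := ih _ (by have := card_erase_add_one hb; omega) A (B.erase b) h rfl
        omega
    rw [edgeCount_swap] at this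
    omega
  push Not at hlowA hlowB
  obtain ⟨X, hXA, Y, hYB, hX, hY, hXY, hYX⟩ :=
    exists_isolated_K33 hr hr' (fun a ha => hlowA a ha) (fun b hb => hlowB b hb)
      (nonempty_of_sum_ne_zero hpos.ne')
  have hA := card_sdiff_add_card_eq_card hXA
  have hB := card_sdiff_add_card_eq_card hYB
  rw [edgeCount_eq_add_sdiff hXA hYB hXY hYX, hX, hY] at hpos ⊢
  rcases (edgeCount r (A \ X) (B \ Y)).eq_zero_or_pos with h0 | h0
  · omega
  · have := ih _ (by omega) (A \ X) (B \ Y) h0 rfl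
    omega

/-- If three vertices of `B` see all of `A`, any further edge would start a `P₇`; otherwise all
but at most two vertices of `B` have degree at most 2. -/
theorem edgeCount_le_of_card_eq_three [DecidableEq α] [DecidableEq β]
    (hr' : ¬HasPath7 (swap r)) (hA : #A = 3) (hB : 4 ≤ #B) : edgeCount r A B ≤ 2 * #B + 2 := by
  rw [edgeCount, sum_card_bipartiteAbove_eq_sum_card_bipartiteBelow]
  have hsub : ∀ b, A.bipartiteBelow r b ⊆ A := fun b => filter_subset _ _
  set T := {b ∈ B | A.bipartiteBelow r b = A}
  by_cases hT : #T ≤ 2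
  · calc ∑ b ∈ B, #(A.bipartiteBelow r b)
        ≤ ∑ b ∈ B, (2 + if A.bipartiteBelow r b = A then 1 else 0) := sum_le_sum fun b _ => by
          have := card_le_card (hsub b)
          split_ifs with h
          · omega
          · have : #(A.bipartiteBelow r b) ≠ 3 := fun h3 =>
              h (eq_of_subset_of_card_le (hsub b) (by omega))
            omega
      _ = 2 * #B + #T := by rw [sum_add_distrib, sum_const, smul_eq_mul, card_filter, mul_comm]
      _ ≤ 2 * #B + 2 := by omega
  obtain ⟨S, hST, hS⟩ := exists_subset_card_eq (show 3 ≤ #T by omega)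
  have hSB : S ⊆ B := hST.trans (filter_subset _ _)
  have isolated : ∀ b ∈ B, b ∉ S → A.bipartiteBelow r b = ∅ := by
    intro b _ hbS
    by_contra hne
    obtain ⟨w, hw⟩ := nonempty_iff_ne_empty.2 hne
    obtain ⟨t₁, t₂, t₃, h₁₂, h₁₃, h₂₃, rfl⟩ := card_eq_three.1 hS
    have ht : ∀ a ∈ A, r a t₁ ∧ r a t₂ ∧ r a t₃ := fun a ha => by
      have hfull : ∀ t ∈ ({t₁, t₂, t₃} : Finset β), r a t := fun t htS => by
        have haT : a ∈ A.bipartiteBelow r t := by rw [(mem_filter.1 (hST htS)).2]; exact ha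
        exact ((mem_bipartiteBelow r).1 haT).2
      simp_all
    exact hr' (hasPath7_swap_of_card_eq_three hA ht h₁₂ h₁₃ h₂₃ (by simpa using hbS)
      ((mem_bipartiteBelow r).1 hw).1 ((mem_bipartiteBelow r).1 hw).2)
  calc ∑ b ∈ B, #(A.bipartiteBelow r b)
      = ∑ b ∈ S, #(A.bipartiteBelow r b) :=
        (sum_subset hSB fun b hb hbS => by rw [isolated b hb hbS, card_empty]).symm
    _ ≤ ∑ _b ∈ S, #A := sum_le_sum fun b _ => card_le_card (hsub b)
    _ ≤ 2 * #B + 2 := by rw [sum_const, smul_eq_mul, hS, hA]; omega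

end Counting

section Graph

variable {α β V : Type*} {G : SimpleGraph V}

theorem containsCopy_pathG_of_adj {k : ℕ} (v : Fin k → V) (hv : Injective v)
    (hadj : ∀ i j : Fin k, i.val + 1 = j.val → G.Adj (v i) (v j)) :
    ContainsCopy G (pathG k) :=
  ⟨v, hv, fun i j h => h.elim (hadj i j) fun h => (hadj j i h).symm⟩

theorem containsCopy_pathG_seven {f : α → V} {g : β → V} (hf : Injective f) (hg : Injective g)
    (hfg : ∀ a b, f a ≠ g b) (h : HasPath7 fun a b => G.Adj (f a) (g b)) :
    ContainsCopy G (pathG 7) := by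
  obtain ⟨x₁, y₁, x₂, y₂, x₃, y₃, x₄, ⟨h₁₂, h₁₃, h₂₃, k₁₂, k₁₃, k₂₃, e₁, e₂, e₃, e₄, e₅⟩,
    h₄₁, h₄₂, h₄₃, e₆⟩ := h
  refine containsCopy_pathG_of_adj ![f x₁, g y₁, f x₂, g y₂, f x₃, g y₃, f x₄] ?_ ?_
  · intro i j hij
    fin_cases i <;> fin_cases j <;> simp_all [hf.eq_iff, hg.eq_iff, eq_comm]
  · intro i j hij
    fin_cases i <;> fin_cases j <;> simp_all [adj_comm]

theorem not_hasPath7_of_not_containsCopy {G : SimpleGraph (α ⊕ β)}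
    (h : ¬ContainsCopy G (pathG 7)) :
    ¬HasPath7 (fun a b => G.Adj (.inl a) (.inr b)) ∧
      ¬HasPath7 (swap fun a b => G.Adj (.inl a) (.inr b)) := by
  refine ⟨fun hP => h (containsCopy_pathG_seven Sum.inl_injective Sum.inr_injective
    (fun _ _ => Sum.inl_ne_inr) hP), fun hP => h ?_⟩
  have hswap :
      (swap fun a b => G.Adj (.inl a) (.inr b)) = fun b a => G.Adj (.inr b) (.inl a) := by
    ext b a
    exact G.adj_comm _ _
  rw [hswap] at hP
  exact containsCopy_pathG_seven Sum.inr_injective Sum.inl_injective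
    (fun _ _ => Sum.inr_ne_inl) hP

theorem three_le_of_containsCopy_pathG_seven {m n : ℕ} {G : SimpleGraph (Fin m ⊕ Fin n)}
    (hG : IsBip G) (h : ContainsCopy G (pathG 7)) : 3 ≤ m := by
  obtain ⟨f, hf, hadj⟩ := h
  have side (i : Fin 6) : (f i.castSucc).isLeft ≠ (f i.succ).isLeft :=
    hG _ _ (hadj (Or.inl rfl))
  have alternating : ∀ s₀ s₁ s₂ s₃ s₄ s₅ : Bool, s₀ ≠ s₁ → s₁ ≠ s₂ → s₂ ≠ s₃ → s₃ ≠ s₄ →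
      s₄ ≠ s₅ → (s₀ ∧ s₂ ∧ s₄) ∨ (s₁ ∧ s₃ ∧ s₅) := by simp [Bool.forall_bool]
  have three_left (i j k : Fin 7) (hij : i ≠ j) (hik : i ≠ k) (hjk : j ≠ k)
      (hl : (f i).isLeft ∧ (f j).isLeft ∧ (f k).isLeft) : 3 ≤ m := by
    obtain ⟨⟨a, ha⟩, ⟨b, hb⟩, ⟨c, hc⟩⟩ := And.imp Sum.isLeft_iff.1
      (And.imp Sum.isLeft_iff.1 Sum.isLeft_iff.1) hl
    have hne (i j : Fin 7) (a b : Fin m) (hij : i ≠ j) (ha : f i = .inl a) (hb : f j = .inl b) :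
        a ≠ b := fun hab => hij (hf (by rw [ha, hb, hab]))
    simpa using (card_eq_three.2 ⟨a, b, c, hne i j a b hij ha hb, hne i k a c hik ha hc,
      hne j k b c hjk hb hc, rfl⟩).symm.trans_le (card_le_univ _)
  rcases alternating _ _ _ _ _ _ (side 0) (side 1) (side 2) (side 3) (side 4) with hl | hl
  · exact three_left 0 2 4 (by decide) (by decide) (by decide) hl
  · exact three_left 1 3 5 (by decide) (by decide) (by decide) hl

theorem ncard_edgeSet_eq_edgeCount {m n : ℕ} {G : SimpleGraph (Fin m ⊕ Fin n)}
    [DecidableRel G.Adj] (hG : IsBip G) :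
    G.edgeSet.ncard = edgeCount (fun a b => G.Adj (.inl a) (.inr b)) univ univ := by
  have hinj : Injective fun p : Fin m × Fin n => s(Sum.inl p.1, Sum.inr p.2) := by
    rintro ⟨a, b⟩ ⟨a', b'⟩ h
    simpa using h
  have hset : G.edgeSet = (fun p : Fin m × Fin n => s(Sum.inl p.1, Sum.inr p.2)) ''
      ↑(univ.filter fun p : Fin m × Fin n => G.Adj (.inl p.1) (.inr p.2)) := by
    ext e
    induction e using Sym2.ind with
    | _ u v =>
    simp only [mem_edgeSet, coe_filter, mem_univ, true_and, Set.mem_image, Set.mem_ofPred_eq,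
      Prod.exists, Sym2.eq_iff]
    have := hG u v
    rcases u with a | b <;> rcases v with a' | b' <;>
      simp_all [adj_comm]
  rw [hset, Set.ncard_image_of_injective _ hinj, Set.ncard_coe_finset, card_filter,
    Fintype.sum_prod_type, edgeCount]
  simp [bipartiteAbove]

end Graph

section Extremal

variable {β : Type*} {H : SimpleGraph β}

theorem bddAbove_bipEx_set (m n : ℕ) (H : SimpleGraph β) :
    BddAbove {e | ∃ G : SimpleGraph (Fin m ⊕ Fin n),
      IsBip G ∧ ¬ ContainsCopy G H ∧ G.edgeSet.ncard = e} :=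
  ⟨Nat.card (Sym2 (Fin m ⊕ Fin n)), by
    rintro _ ⟨G, -, -, rfl⟩
    exact Set.ncard_le_card _⟩

theorem le_bipEx {m n : ℕ} {G : SimpleGraph (Fin m ⊕ Fin n)} (hG : IsBip G)
    (hH : ¬ContainsCopy G H) : G.edgeSet.ncard ≤ bipEx m n H :=
  le_csSup (bddAbove_bipEx_set m n H) ⟨G, hG, hH, rfl⟩

theorem exists_ncard_edgeSet_eq_bipEx (m n : ℕ) {a b : β} (hab : H.Adj a b) :
    ∃ G : SimpleGraph (Fin m ⊕ Fin n),
      IsBip G ∧ ¬ContainsCopy G H ∧ G.edgeSet.ncard = bipEx m n H := by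
  refine Nat.sSup_mem ⟨0, ?_⟩ (bddAbove_bipEx_set m n H)
  exact ⟨⊥, fun _ _ h => h.elim, fun ⟨_, _, hf⟩ => hf hab, by simp⟩

theorem two_mul_le_bipEx_two_pathG_seven (n : ℕ) : 2 * n ≤ bipEx 2 n (pathG 7) := by
  have hK : IsBip (completeBipartiteGraph (Fin 2) (Fin n)) := by
    rintro (a | a) (b | b) h <;> simp_all
  have hcard : (completeBipartiteGraph (Fin 2) (Fin n)).edgeSet.ncard = 2 * n := by
    simp [Set.ncard_def, encard_edgeSet_completeBipartiteGraph]
  exact hcard ▸ le_bipEx hK fun h => by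
    have := three_le_of_containsCopy_pathG_seven hK h
    omega

end Extremal

theorem edges_le_of_local_bounds {p m a b e : ℕ} (hp : 3 ≤ p) (hm : 3 * p + 1 ≤ m)
    (hb : b + p ≤ m) (hprod : e ≤ a * b) (hthree : a = 3 → 4 ≤ b → e ≤ 2 * b + 2)
    (hgen : 0 < e → e + 3 ≤ 2 * (a + b)) :
    (e : ℤ) ≤ p * ((a : ℤ) - 2) + m - p + b ∧
      ((e : ℤ) = p * ((a : ℤ) - 2) + m - p + b → a = 2 ∧ b = m - p) := by
  rcases lt_or_ge a 4 with ha | ha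
  · interval_cases a <;> omega
  · have : (3 : ℤ) * (a - 2) ≤ p * (a - 2) := by
      gcongr
      · omega
      · exact_mod_cast hp
    omega

end BipartitePath

open BipartitePath

theorem statement_12 (p m n₁ m₁ : ℕ) (hp : 3 ≤ p) (hm : 3 * p + 1 ≤ m)
    (hm₁ : m₁ ≤ m - p) :
    (bipEx n₁ m₁ (pathG 7) : ℤ) ≤ (p : ℤ) * ((n₁ : ℤ) - 2) + (m : ℤ) - (p : ℤ) + (m₁ : ℤ) ∧
    ((bipEx n₁ m₁ (pathG 7) : ℤ) = (p : ℤ) * ((n₁ : ℤ) - 2) + (m : ℤ) - (p : ℤ) + (m₁ : ℤ) ↔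
      n₁ = 2 ∧ m₁ = m - p) := by
  classical
  obtain ⟨G, hG, hfree, hcard⟩ :=
    exists_ncard_edgeSet_eq_bipEx n₁ m₁ (show (pathG 7).Adj 0 1 from Or.inl rfl)
  obtain ⟨hr, hr'⟩ := not_hasPath7_of_not_containsCopy hfree
  rw [ncard_edgeSet_eq_edgeCount hG] at hcard
  have hprod : bipEx n₁ m₁ (pathG 7) ≤ n₁ * m₁ := by
    simpa [← hcard] using edgeCount_le_card_mul (A := univ) (B := univ)
      (r := fun a b => G.Adj (Sum.inl a) (Sum.inr b))
  have hthree (h₃ : n₁ = 3) (h₄ : 4 ≤ m₁) : bipEx n₁ m₁ (pathG 7) ≤ 2 * m₁ + 2 := by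
    simpa [← hcard] using edgeCount_le_of_card_eq_three hr' (A := univ) (B := univ)
      (by simpa using h₃) (by simpa using h₄)
  have hgen (hpos : 0 < bipEx n₁ m₁ (pathG 7)) :
      bipEx n₁ m₁ (pathG 7) + 3 ≤ 2 * (n₁ + m₁) := by
    simpa [← hcard] using edgeCount_add_three_le hr hr' univ univ (hcard ▸ hpos)
  have hbound := edges_le_of_local_bounds hp hm (by omega) hprod hthree hgen
  refine ⟨hbound.1, hbound.2, ?_⟩
  rintro ⟨rfl, rfl⟩
  have := two_mul_le_bipEx_two_pathG_seven (m - p)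
  omega
end

section
/- Let G=(A,B;E) be a bipartite graph with |A| = a and |B| = n, let b be a real number with 0 < b ≤ a, and set t = ⌈b⌉. If the number of edges of G satisfies e(G) ≥ b·n, then there exists a subset A′ ⊆ A with |A′| = t such that the number of common neighbours of the vertices of A′ in B is at least c·n, where c = (b − t + 1)/((a − t + 1)·C(a,t)) > 0 and C(a,t) denotes the binomial coefficient a choose t. -/
open SimpleGraph

/-! Double count the pairs `(S, j)` with `S` a `t`-subset of `A` inside the neighbourhood of
`j ∈ B`: `∑_S |N(S)| = ∑_j C(d(j), t)`. Since `C(m, t) ≥ m - t + 1` for `t ≥ 1`, the right side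
is at least `∑_j (d(j) - t + 1) ≥ n (b - t + 1)`, so one of the `C(a, t)` sets `S` has
`|N(S)| ≥ n (b - t + 1) / C(a, t)`. -/

open Finset

theorem Nat.cast_sub_add_one_le_choose {R : Type*} [CommRing R] [LinearOrder R]
    [IsStrictOrderedRing R] {t : ℕ} (ht : 1 ≤ t) (m : ℕ) :
    (m : R) - t + 1 ≤ m.choose t := by
  rcases lt_or_ge m t with hmt | htm
  · have : (m : R) + 1 ≤ t := by exact_mod_cast hmt
    linarith [(Nat.cast_nonneg (m.choose t) : (0 : R) ≤ _)]
  · have : m - t + 1 ≤ m.choose t :=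
      calc m - t + 1 = (m - t + 1).choose (m - t) := (Nat.choose_succ_self_right _).symm
        _ ≤ m.choose (m - t) := Nat.choose_le_choose _ (by omega)
        _ = m.choose t := Nat.choose_symm htm
    calc (m : R) - t + 1 = ((m - t + 1 : ℕ) : R) := by push_cast [Nat.cast_sub htm]; ring
      _ ≤ m.choose t := by exact_mod_cast this

namespace BipartiteRel

variable {α β : Type*} [Fintype β]

def commonNeighbors (E : α → β → Prop) [DecidableRel E] (S : Finset α) : Finset β :=
  {j | ∀ i ∈ S, E i j}

theorem ncard_setOf_prod_eq_sum_card [Fintype α] (E : α → β → Prop) [DecidableRel E] :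
    {p : α × β | E p.1 p.2}.ncard = ∑ j, #{i | E i j} := by
  rw [Set.ncard_eq_toFinset_card', Set.toFinset_ofPred, card_filter, Fintype.sum_prod_type_right]
  exact sum_congr rfl fun j _ => (card_filter _ _).symm

theorem ncard_setOf_forall_mem_eq_card_commonNeighbors (E : α → β → Prop) [DecidableRel E]
    (S : Finset α) : {j | ∀ i ∈ S, E i j}.ncard = #(commonNeighbors E S) := by
  rw [Set.ncard_eq_toFinset_card']
  simp [commonNeighbors]

theorem sum_card_commonNeighbors_powersetCard [Fintype α] [DecidableEq α] (E : α → β → Prop)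
    [DecidableRel E] (t : ℕ) :
    ∑ S ∈ powersetCard t univ, #(commonNeighbors E S) = ∑ j, (#{i | E i j}).choose t := by
  set r : Finset α → β → Prop := fun S j => ∀ i ∈ S, E i j
  have hbelow (j : β) : (powersetCard t univ).bipartiteBelow r j = powersetCard t {i | E i j} := by
    ext S
    simp [r, bipartiteBelow, subset_iff, and_comm]
  calc ∑ S ∈ powersetCard t univ, #(commonNeighbors E S)
      = ∑ j, #((powersetCard t univ).bipartiteBelow r j) := by
        rw [← sum_card_bipartiteAbove_eq_sum_card_bipartiteBelow]
        simp only [commonNeighbors, bipartiteAbove]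
        congr!
    _ = ∑ j, (#{i | E i j}).choose t := by simp_rw [hbelow, card_powersetCard]

theorem exists_card_commonNeighbors_ge [Fintype α] [DecidableEq α]
    (E : α → β → Prop) [DecidableRel E] {b : ℝ} {t : ℕ} (ht1 : 1 ≤ t)
    (hta : t ≤ Fintype.card α) (he : b * Fintype.card β ≤ {p : α × β | E p.1 p.2}.ncard) :
    ∃ S : Finset α, #S = t ∧
      Fintype.card β * (b - t + 1) ≤ (Fintype.card α).choose t * #(commonNeighbors E S) := by
  set X := ∑ j, (#{i | E i j}).choose t
  have hX : Fintype.card β * (b - t + 1) ≤ X := by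
    rw [ncard_setOf_prod_eq_sum_card] at he
    calc Fintype.card β * (b - t + 1) ≤ ∑ j : β, ((#{i | E i j} : ℝ) - t + 1) := by
          simp only [sum_add_distrib, sum_sub_distrib, sum_const, card_univ, nsmul_eq_mul]
          push_cast at he
          linarith
      _ ≤ X := by
          push_cast [X]
          exact sum_le_sum fun j _ => Nat.cast_sub_add_one_le_choose ht1 _
  have hP : (powersetCard t (univ : Finset α)).Nonempty :=
    powersetCard_nonempty.mpr (by simpa using hta)
  have hsum : ∑ _S ∈ powersetCard t (univ : Finset α), X ≤
      ∑ S ∈ powersetCard t univ, (Fintype.card α).choose t * #(commonNeighbors E S) := by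
    rw [← mul_sum, sum_card_commonNeighbors_powersetCard, sum_const, card_powersetCard,
      card_univ, smul_eq_mul]
  obtain ⟨S, hS, hXS⟩ := exists_le_of_sum_le hP hsum
  exact ⟨S, (mem_powersetCard.mp hS).2, hX.trans (by exact_mod_cast hXS)⟩

end BipartiteRel

theorem statement_13 (a n : ℕ) (E : Fin a → Fin n → Prop) (b : ℝ)
    (hb0 : 0 < b) (hba : b ≤ (a : ℝ)) (t : ℕ) (ht : t = ⌈b⌉₊)
    (he : b * (n : ℝ) ≤ (({p : Fin a × Fin n | E p.1 p.2}.ncard : ℕ) : ℝ)) :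
    0 < (b - (t : ℝ) + 1) / (((a : ℝ) - (t : ℝ) + 1) * ((a.choose t : ℕ) : ℝ)) ∧
    ∃ A' : Finset (Fin a), A'.card = t ∧
      (b - (t : ℝ) + 1) / (((a : ℝ) - (t : ℝ) + 1) * ((a.choose t : ℕ) : ℝ)) * (n : ℝ) ≤
        (({j : Fin n | ∀ i ∈ A', E i j}.ncard : ℕ) : ℝ) := by
  classical
  have ht1 : 1 ≤ t := ht ▸ Nat.one_le_ceil_iff.mpr hb0
  have hta : t ≤ a := ht ▸ Nat.ceil_le.mpr hba
  have hbt : (t : ℝ) < b + 1 := ht ▸ Nat.ceil_lt_add_one hb0.le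
  have hnum : 0 < b - t + 1 := by linarith
  have hslack : (1 : ℝ) ≤ a - t + 1 := by linarith [(Nat.cast_le (α := ℝ)).mpr hta]
  have hchoose : (0 : ℝ) < a.choose t := by exact_mod_cast Nat.choose_pos hta
  refine ⟨by positivity, ?_⟩
  obtain ⟨S, hS, hcommon⟩ :=
    BipartiteRel.exists_card_commonNeighbors_ge E ht1 (by simpa using hta) (by simpa using he)
  refine ⟨S, hS, ?_⟩
  simp only [Fintype.card_fin] at hcommon
  rw [BipartiteRel.ncard_setOf_forall_mem_eq_card_commonNeighbors, div_mul_eq_mul_div,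
    div_le_iff₀ (by positivity)]
  calc (b - t + 1) * n = n * (b - t + 1) := mul_comm _ _
    _ ≤ (a - t + 1) * (n * (b - t + 1)) := le_mul_of_one_le_left (by positivity) hslack
    _ ≤ (a - t + 1) * (a.choose t * #(BipartiteRel.commonNeighbors E S)) := by gcongr
    _ = _ := by ring
end

section
/- Let F_ℓ = P_{k_1} ∪ ⋯ ∪ P_{k_ℓ} be a linear forest with ℓ ≥ 1, k_1 ≥ ⋯ ≥ k_ℓ ≥ 2 and p = (∑_{i=1}^ℓ ⌊k_i/2⌋) − 1 ≥ 1. There exists N (depending on k_1,…,k_ℓ) such that the following holds for all n ≥ N: if G is a connected graph on n vertices containing no subgraph isomorphic to F_ℓ whose spectral radius λ = λ(G) is maximal among all connected F_ℓ-free graphs on n vertices, and if x = (x_u)_{u∈V(G)} is an entrywise positive eigenvector of the adjacency matrix of G corresponding to λ whose maximum entry equals 1, then x_u ≥ 1/λ for every vertex u of G. -/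
open SimpleGraph

/-!
Write `ρ = λ(G)` and `x_w = 1`. The star `K_{1,n-1}` is connected and `F`-free (`F` has two disjoint
edges), so `ρ ≥ √(n - 1) ≥ 2 |F|`, and `w` has at least `ρ x_w = ρ` neighbours.
Suppose `ρ x_u < 1` for some `u ≠ w`. Delete the edges at `u`, keep the component `S` of `w` and
re-attach every vertex outside `S`, `u` among them, as a leaf at `w`. The resulting graph `H` is
connected and `F`-free: the vertices of a copy of `F` in `H` that fall outside `S` are leaves at
`w`, and can be moved to the at least `|F|` neighbours of `w` in `G` that the copy does not use.
But `x` restricted to `S ∪ {u}` is a test vector for `H` whose Rayleigh quotient exceeds `ρ` by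
`2 x_u (1 - ρ x_u) > 0` over its squared norm, contradicting the maximality of `ρ`.
-/

open Matrix Module.End

theorem Matrix.IsHermitian.dotProduct_mulVec_le_sSup_hasEigenvalue {ι : Type*} [Fintype ι]
    [DecidableEq ι] {A : Matrix ι ι ℝ} (hA : A.IsHermitian) (v : ι → ℝ) :
    v ⬝ᵥ (A *ᵥ v) ≤ sSup {μ | HasEigenvalue (toLin' A) μ} * (v ⬝ᵥ v) := by
  set c := sSup {μ | HasEigenvalue (toLin' A) μ}
  have hB : (c • (1 : Matrix ι ι ℝ) - A).IsHermitian :=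
    (isHermitian_one.smul (IsSelfAdjoint.all c)).sub hA
  -- an eigenvalue `ν` of `c • 1 - A` gives the eigenvalue `c - ν ≤ c` of `A`
  have hpsd : (c • (1 : Matrix ι ι ℝ) - A).PosSemidef := by
    refine hB.posSemidef_iff_eigenvalues_nonneg.mpr fun i => ?_
    set e := ⇑(hB.eigenvectorBasis i)
    have he : e ≠ 0 := fun h =>
      hB.eigenvectorBasis.orthonormal.ne_zero i (by simpa [e] using h)
    have hAe : A *ᵥ e = (c - hB.eigenvalues i) • e := by
      have := hB.mulVec_eigenvectorBasis i
      rw [sub_mulVec, smul_mulVec, one_mulVec] at this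
      rw [sub_smul, ← this]
      abel
    have hc : HasEigenvalue (toLin' A) (c - hB.eigenvalues i) :=
      hasEigenvalue_of_hasEigenvector ⟨mem_eigenspace_iff.mpr (by rwa [toLin'_apply]), he⟩
    have := le_csSup (finite_hasEigenvalue _).bddAbove hc
    simp only [Pi.zero_apply]
    linarith
  have := hpsd.dotProduct_mulVec_nonneg v
  rw [star_trivial, sub_mulVec, smul_mulVec, one_mulVec, dotProduct_sub, dotProduct_smul,
    smul_eq_mul] at this
  linarith

section SpectralRadius

variable {n : ℕ}

theorem adjMat_eq_adjMatrix (G : SimpleGraph (Fin n)) [DecidableRel G.Adj] :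
    adjMat G = G.adjMatrix ℝ := by
  ext i j
  simp [adjMat, adjMatrix_apply]

theorem isHermitian_adjMat (G : SimpleGraph (Fin n)) : (adjMat G).IsHermitian := by
  classical
  rw [adjMat_eq_adjMatrix]
  exact G.isSymm_adjMatrix

theorem adjMat_comm (G : SimpleGraph (Fin n)) (i j : Fin n) : adjMat G i j = adjMat G j i := by
  simpa using ((isHermitian_adjMat G).apply i j).symm

theorem adjMat_nonneg (G : SimpleGraph (Fin n)) (i j : Fin n) : 0 ≤ adjMat G i j := by
  unfold adjMat
  split_ifs <;> norm_num

theorem dotProduct_adjMat_mulVec_le (G : SimpleGraph (Fin n)) (v : Fin n → ℝ) :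
    v ⬝ᵥ (adjMat G *ᵥ v) ≤ specRad G * (v ⬝ᵥ v) :=
  (isHermitian_adjMat G).dotProduct_mulVec_le_sSup_hasEigenvalue v

theorem le_specRad_of_smul_le_mulVec (G : SimpleGraph (Fin n)) {μ : ℝ} {y : Fin n → ℝ}
    (hy : 0 ≤ y) (hy0 : y ≠ 0) (h : μ • y ≤ adjMat G *ᵥ y) : μ ≤ specRad G := by
  have hpos : 0 < y ⬝ᵥ y := by simpa using dotProduct_self_star_pos_iff.mpr hy0
  have := calc μ * (y ⬝ᵥ y) = y ⬝ᵥ (μ • y) := by rw [dotProduct_smul, smul_eq_mul]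
    _ ≤ y ⬝ᵥ (adjMat G *ᵥ y) := dotProduct_le_dotProduct_of_nonneg_left h hy
    _ ≤ specRad G * (y ⬝ᵥ y) := dotProduct_adjMat_mulVec_le G y
  exact le_of_mul_le_mul_right this hpos

theorem sqrt_le_specRad_starGraph (hn : 2 ≤ n) (c : Fin n) :
    √((n : ℝ) - 1) ≤ specRad (starGraph c) := by
  classical
  have h1 : (1 : ℝ) ≤ n := by exact_mod_cast (by omega : 1 ≤ n)
  set y : Fin n → ℝ := fun i => if i = c then √((n : ℝ) - 1) else 1
  have hy : 0 ≤ y := fun i => by dsimp only [y]; split_ifs <;> positivity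
  have hy0 : y ≠ 0 := fun h => by
    have := congrFun h c
    simp only [y, if_pos rfl, Pi.zero_apply, Real.sqrt_eq_zero', tsub_le_iff_right] at this
    have : (2 : ℝ) ≤ n := by exact_mod_cast hn
    linarith
  refine le_specRad_of_smul_le_mulVec _ hy hy0 fun i => ?_
  rw [adjMat_eq_adjMatrix, adjMatrix_mulVec_apply]
  by_cases hi : i = c
  · subst hi
    have hN : (starGraph i).neighborFinset i = Finset.univ.erase i := by ext; simp [eq_comm]
    rw [hN, Finset.sum_congr rfl fun j hj => if_neg (Finset.ne_of_mem_erase hj)]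
    simp [y, Real.mul_self_sqrt (sub_nonneg.mpr h1), Nat.cast_sub (by omega : 1 ≤ n)]
  · have hN : (starGraph c).neighborFinset i = {c} := by
      ext j
      simp only [mem_neighborFinset, starGraph_adj, Finset.mem_singleton, hi, false_or]
      exact ⟨And.right, fun hj => ⟨hj ▸ hi, hj⟩⟩
    simp [hN, y, hi]

theorem le_degree_of_mulVec_eq (G : SimpleGraph (Fin n)) [DecidableRel G.Adj] {x : Fin n → ℝ}
    {μ : ℝ} (heig : adjMat G *ᵥ x = μ • x) (hle : ∀ u, x u ≤ 1) {w : Fin n} (hw : x w = 1) :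
    μ ≤ G.degree w := by
  have h := congrFun heig w
  rw [adjMat_eq_adjMatrix, adjMatrix_mulVec_apply, Pi.smul_apply, hw, smul_eq_mul,
    mul_one] at h
  rw [← h]
  exact (Finset.sum_le_card_nsmul _ _ 1 fun j _ => hle j).trans_eq (by simp)

end SpectralRadius

section QuadraticForm

variable {n : ℕ}

noncomputable def quadFormOn (G : SimpleGraph (Fin n)) (s : Finset (Fin n)) (x : Fin n → ℝ) : ℝ :=
  ∑ i ∈ s, ∑ j ∈ s, adjMat G i j * x i * x j

theorem quadFormOn_le_specRad_mul (G : SimpleGraph (Fin n)) (s : Finset (Fin n))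
    (x : Fin n → ℝ) : quadFormOn G s x ≤ specRad G * ∑ i ∈ s, x i ^ 2 := by
  classical
  set y : Fin n → ℝ := fun i => if i ∈ s then x i else 0
  have hq : y ⬝ᵥ (adjMat G *ᵥ y) = quadFormOn G s x := by
    simp [y, dotProduct, mulVec, quadFormOn, Finset.mul_sum, mul_ite, Finset.sum_ite_mem,
      mul_comm, mul_left_comm]
  have hn : y ⬝ᵥ y = ∑ i ∈ s, x i ^ 2 := by
    simp [y, dotProduct, mul_ite, ite_mul, Finset.sum_ite_mem, sq]
  exact hq ▸ hn ▸ dotProduct_adjMat_mulVec_le G y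

theorem quadFormOn_congr {G H : SimpleGraph (Fin n)} {s : Finset (Fin n)}
    (h : ∀ i ∈ s, ∀ j ∈ s, (G.Adj i j ↔ H.Adj i j)) (x : Fin n → ℝ) :
    quadFormOn G s x = quadFormOn H s x := by
  refine Finset.sum_congr rfl fun i hi => Finset.sum_congr rfl fun j hj => ?_
  by_cases hG : G.Adj i j
  · simp [adjMat, hG, (h i hi j hj).mp hG]
  · simp [adjMat, hG, mt (h i hi j hj).mpr hG]

theorem quadFormOn_insert (G : SimpleGraph (Fin n)) {s : Finset (Fin n)} {u : Fin n}
    (hu : u ∉ s) (x : Fin n → ℝ) :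
    quadFormOn G (insert u s) x = quadFormOn G s x + 2 * x u * ∑ j ∈ s, adjMat G u j * x j := by
  have hdiag : adjMat G u u = 0 := by simp [adjMat]
  have hrow : ∑ j ∈ s, adjMat G u j * x u * x j = x u * ∑ j ∈ s, adjMat G u j * x j := by
    rw [Finset.mul_sum]
    exact Finset.sum_congr rfl fun j _ => by ring
  have hcol : ∑ i ∈ s, adjMat G u i * x i * x u = x u * ∑ j ∈ s, adjMat G u j * x j := by
    rw [Finset.mul_sum]
    exact Finset.sum_congr rfl fun j _ => by ring
  simp only [quadFormOn, Finset.sum_insert hu, adjMat_comm _ _ u, hdiag, Finset.sum_add_distrib,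
    hrow, hcol]
  ring

theorem quadFormOn_eq_of_mulVec_eq {G : SimpleGraph (Fin n)} {x : Fin n → ℝ} {μ : ℝ}
    (heig : adjMat G *ᵥ x = μ • x) {s : Finset (Fin n)} {u : Fin n} (hu : u ∉ s)
    (hs : ∀ i ∈ s, ∀ j, G.Adj i j → j ∈ s ∨ j = u) :
    quadFormOn G s x = μ * ∑ i ∈ s, x i ^ 2 - x u * ∑ j ∈ s, adjMat G u j * x j := by
  have hrow : ∀ i ∈ s, ∑ j ∈ s, adjMat G i j * x j = μ * x i - adjMat G i u * x u := by
    intro i hi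
    have h := congrFun heig i
    rw [mulVec, dotProduct, ← Finset.sum_subset (Finset.subset_univ (insert u s)),
      Finset.sum_insert hu] at h
    · simp only [Pi.smul_apply, smul_eq_mul] at h
      linarith
    · intro j _ hj
      have : ¬ G.Adj i j := fun hij => hj (by simpa [or_comm] using hs i hi j hij)
      simp [adjMat, this]
  calc quadFormOn G s x = ∑ i ∈ s, x i * ∑ j ∈ s, adjMat G i j * x j := by
        simp only [quadFormOn, Finset.mul_sum]
        exact Finset.sum_congr rfl fun i _ => Finset.sum_congr rfl fun j _ => by ring
    _ = ∑ i ∈ s, (μ * x i ^ 2 - x u * (adjMat G u i * x i)) :=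
        Finset.sum_congr rfl fun i hi => by rw [hrow i hi, adjMat_comm G i u]; ring
    _ = _ := by rw [Finset.sum_sub_distrib, ← Finset.mul_sum, ← Finset.mul_sum]

end QuadraticForm

namespace SimpleGraph

variable {V : Type*} (G : SimpleGraph V)

/-- Keep the connected component of `w` and turn every vertex outside it into a leaf at `w`. -/
def componentWithLeaves (w : V) : SimpleGraph V :=
  fromRel fun a b => (G.Reachable w a ∧ G.Adj a b) ∨ (¬ G.Reachable w a ∧ b = w)

variable {G} {w a b : V}

theorem componentWithLeaves_adj_of_reachable (ha : G.Reachable w a) (hb : G.Reachable w b) :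
    (G.componentWithLeaves w).Adj a b ↔ G.Adj a b := by
  simp only [componentWithLeaves, fromRel_adj]
  constructor
  · rintro ⟨-, (h | h) | (h | h)⟩
    · exact h.2
    · exact absurd ha h.1
    · exact h.2.symm
    · exact absurd hb h.1
  · intro h
    exact ⟨h.ne, Or.inl (Or.inl ⟨ha, h⟩)⟩

theorem componentWithLeaves_adj_of_not_reachable (ha : ¬ G.Reachable w a) :
    (G.componentWithLeaves w).Adj a b ↔ b = w := by
  simp only [componentWithLeaves, fromRel_adj]
  constructor
  · rintro ⟨-, (h | h) | (h | h)⟩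
    · exact absurd h.1 ha
    · exact h.2
    · exact absurd (h.1.trans h.2.reachable) ha
    · exact (ha (by rw [h.2])).elim
  · rintro rfl
    exact ⟨fun h => ha (h ▸ .rfl), Or.inl (Or.inr ⟨ha, rfl⟩)⟩

theorem componentWithLeaves_connected : (G.componentWithLeaves w).Connected := by
  have hcomp : ∀ {a b : V} (p : G.Walk a b), G.Reachable w a →
      (G.componentWithLeaves w).Reachable a b := by
    intro a b p
    induction p with
    | nil => exact fun _ => .rfl
    | cons h p ih =>
      intro ha
      refine Adj.reachable ?_ |>.trans (ih (ha.trans h.reachable))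
      exact (componentWithLeaves_adj_of_reachable ha (ha.trans h.reachable)).mpr h
  have hw : ∀ v, (G.componentWithLeaves w).Reachable w v := fun v => by
    by_cases hv : G.Reachable w v
    · exact hcomp hv.some .rfl
    · exact ((componentWithLeaves_adj_of_not_reachable hv).mpr rfl).reachable.symm
  exact (connected_iff _).mpr ⟨fun a b => (hw a).symm.trans (hw b), ⟨w⟩⟩

end SimpleGraph

theorem ContainsCopy.of_componentWithLeaves {V β : Type*} [Fintype β] {G G' : SimpleGraph V}
    {F : SimpleGraph β} (hle : G' ≤ G) {w : V} {T : Finset V} (hT : ∀ v ∈ T, G.Adj w v)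
    (hcard : 2 * Fintype.card β ≤ T.card) (h : ContainsCopy (G'.componentWithLeaves w) F) :
    ContainsCopy G F := by
  classical
  obtain ⟨f, hf, hhom⟩ := h
  have hfree : Fintype.card β ≤ (T \ Finset.univ.image f).card := by
    have := Finset.le_card_sdiff (Finset.univ.image f) T
    rw [Finset.card_image_of_injective _ hf, Finset.card_univ] at this
    omega
  obtain ⟨e⟩ := Function.Embedding.nonempty_of_card_le (hfree.trans_eq (Fintype.card_coe _).symm)
  have he (a : β) : (e a : V) ∈ T ∧ ∀ b, f b ≠ e a := by
    obtain ⟨hT, him⟩ := Finset.mem_sdiff.mp (e a).2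
    exact ⟨hT, fun b hb => him (Finset.mem_image.mpr ⟨b, Finset.mem_univ b, hb⟩)⟩
  let g a := if G'.Reachable w (f a) then f a else (e a : V)
  refine ⟨g, fun a b hab => ?_, fun a b hab => ?_⟩
  · simp only [g] at hab
    split_ifs at hab
    · exact hf hab
    · exact absurd hab ((he b).2 a)
    · exact absurd hab.symm ((he a).2 b)
    · exact e.injective (Subtype.ext hab)
  · have hH := hhom hab
    simp only [g]
    split_ifs with ha hb hb
    · exact hle ((componentWithLeaves_adj_of_reachable ha hb).mp hH)
    · rw [(componentWithLeaves_adj_of_not_reachable hb).mp hH.symm]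
      exact hT _ (he b).1
    · rw [(componentWithLeaves_adj_of_not_reachable ha).mp hH]
      exact (hT _ (he a).1).symm
    · exact absurd ((componentWithLeaves_adj_of_not_reachable ha).mp hH ▸ .rfl) hb

theorem not_containsCopy_starGraph {V β : Type*} {F : SimpleGraph β} (r : V) {a b c d : β}
    (hab : F.Adj a b) (hcd : F.Adj c d) (hac : a ≠ c) (had : a ≠ d) (hbc : b ≠ c)
    (hbd : b ≠ d) : ¬ ContainsCopy (starGraph r) F := by
  rintro ⟨f, hf, hhom⟩
  rcases (starGraph_adj.mp (hhom hab)).2 with e1 | e1 <;>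
    rcases (starGraph_adj.mp (hhom hcd)).2 with e2 | e2
  exacts [hac (hf (e1.trans e2.symm)), had (hf (e1.trans e2.symm)),
    hbc (hf (e1.trans e2.symm)), hbd (hf (e1.trans e2.symm))]

theorem linearForest_exists_disjoint_adj {ℓ : ℕ} {k : Fin ℓ → ℕ} (hk : ∀ i, 2 ≤ k i)
    (hsum : 2 ≤ ∑ i, k i / 2) :
    ∃ a b c d, (linearForest k).Adj a b ∧ (linearForest k).Adj c d ∧
      a ≠ c ∧ a ≠ d ∧ b ≠ c ∧ b ≠ d := by
  rcases ℓ with _ | _ | ℓ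
  · simp at hsum
  · have h4 : 4 ≤ k 0 := by simp at hsum; omega
    refine ⟨⟨0, 0, by omega⟩, ⟨0, 1, by omega⟩, ⟨0, 2, by omega⟩, ⟨0, 3, by omega⟩,
      ⟨rfl, by simp⟩, ⟨rfl, by simp⟩, ?_, ?_, ?_, ?_⟩ <;> simp
  · have h0 := hk 0
    have h1 := hk 1
    refine ⟨⟨0, 0, by omega⟩, ⟨0, 1, by omega⟩, ⟨1, 0, by omega⟩, ⟨1, 1, by omega⟩,
      ⟨rfl, by simp⟩, ⟨rfl, by simp⟩, ?_, ?_, ?_, ?_⟩ <;> simp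

theorem one_le_mul_of_specRad_rewired_le {n : ℕ} {G H : SimpleGraph (Fin n)} {x : Fin n → ℝ}
    {ρ : ℝ} (heig : adjMat G *ᵥ x = ρ • x) (hx : ∀ v, 0 ≤ x v) {s : Finset (Fin n)}
    {u w : Fin n} (hus : u ∉ s) (hws : w ∈ s) (hw : x w = 1) (hxu : 0 < x u)
    (hs : ∀ i ∈ s, ∀ j, G.Adj i j → j ∈ s ∨ j = u)
    (hHs : ∀ i ∈ s, ∀ j ∈ s, (H.Adj i j ↔ G.Adj i j)) (hHu : ∀ j ∈ s, (H.Adj u j ↔ j = w))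
    (hHρ : specRad H ≤ ρ) : 1 ≤ ρ * x u := by
  have hHu' : ∑ j ∈ s, adjMat H u j * x j = 1 := by
    rw [Finset.sum_congr rfl fun j hj => show adjMat H u j * x j = if j = w then x j else 0 by
      by_cases h : H.Adj u j
      · obtain rfl := (hHu j hj).mp h
        simp [adjMat, h]
      · simp [adjMat, h, mt (hHu j hj).mpr h]]
    rw [Finset.sum_ite_eq' s w, if_pos hws, hw]
  have hσ : ∑ j ∈ s, adjMat G u j * x j ≤ ρ * x u := by
    calc ∑ j ∈ s, adjMat G u j * x j ≤ ∑ j, adjMat G u j * x j :=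
          Finset.sum_le_sum_of_subset_of_nonneg (Finset.subset_univ s) fun j _ _ =>
            mul_nonneg (adjMat_nonneg G u j) (hx j)
      _ = ρ * x u := by simpa [mulVec, dotProduct] using congrFun heig u
  -- `x` restricted to `s ∪ {u}` as a test vector for `H`
  have hray := (quadFormOn_le_specRad_mul H (insert u s) x).trans
    (mul_le_mul_of_nonneg_right hHρ (Finset.sum_nonneg fun i _ => sq_nonneg (x i)))
  rw [quadFormOn_insert H hus, hHu', quadFormOn_congr hHs, quadFormOn_eq_of_mulVec_eq heig hus hs,
    Finset.sum_insert hus] at hray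
  nlinarith [mul_le_mul_of_nonneg_left hσ hxu.le]

theorem one_le_specRad_mul_of_isMax {n : ℕ} {β : Type*} [Fintype β] {F : SimpleGraph β}
    {G : SimpleGraph (Fin n)} (hfree : ¬ ContainsCopy G F)
    (hmax : ∀ H : SimpleGraph (Fin n), H.Connected → ¬ ContainsCopy H F → specRad H ≤ specRad G)
    (hρ : 2 * Fintype.card β ≤ specRad G) {x : Fin n → ℝ} (hx : ∀ u, 0 < x u)
    (heig : adjMat G *ᵥ x = specRad G • x) (hle : ∀ u, x u ≤ 1) {w : Fin n} (hw : x w = 1)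
    {u : Fin n} (huw : u ≠ w) : 1 ≤ specRad G * x u := by
  classical
  set G₀ := G.deleteIncidenceSet u
  set s := Finset.univ.filter (G₀.Reachable w)
  have hmem : ∀ v, v ∈ s ↔ G₀.Reachable w v := by simp [s]
  have hu : ¬ G₀.Reachable w u := not_reachable_of_neighborSet_right_eq_empty huw.symm
    (by ext; simp [G₀, deleteIncidenceSet_adj])
  have hus : u ∉ s := mt (hmem u).mp hu
  have hG₀ : ∀ i ∈ s, ∀ j, j ≠ u → (G₀.Adj i j ↔ G.Adj i j) := fun i hi j hju => by
    simp only [G₀, deleteIncidenceSet_adj, hju, ne_eq, not_false_eq_true, and_true,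
      and_iff_left_iff_imp]
    rintro - rfl
    exact hus hi
  have hHρ : specRad (G₀.componentWithLeaves w) ≤ specRad G := by
    refine hmax _ componentWithLeaves_connected fun hH => hfree ?_
    refine hH.of_componentWithLeaves (deleteIncidenceSet_le G u) (T := G.neighborFinset w)
      (fun v hv => (mem_neighborFinset _ _ _).mp hv) ?_
    exact_mod_cast hρ.trans (le_degree_of_mulVec_eq G heig hle hw)
  refine one_le_mul_of_specRad_rewired_le heig (fun v => (hx v).le) hus ((hmem w).mpr .rfl) hw
    (hx u) (fun i hi j hij => ?_) (fun i hi j hj => ?_)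
    (fun j _ => componentWithLeaves_adj_of_not_reachable hu) hHρ
  · by_cases hju : j = u
    · exact Or.inr hju
    · exact Or.inl ((hmem j).mpr (((hmem i).mp hi).trans ((hG₀ i hi j hju).mpr hij).reachable))
  · rw [componentWithLeaves_adj_of_reachable ((hmem i).mp hi) ((hmem j).mp hj)]
    exact hG₀ i hi j fun h => hus (h ▸ hj)

theorem statement_14_general (ℓ : ℕ) (k : Fin ℓ → ℕ) (hk : ∀ i, 2 ≤ k i)
    (p : ℕ) (hp : p = (∑ i, k i / 2) - 1) (hp1 : 1 ≤ p) :
    ∃ N : ℕ, ∀ n : ℕ, N ≤ n →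
      ∀ G : SimpleGraph (Fin n), G.Connected → ¬ ContainsCopy G (linearForest k) →
        (∀ H : SimpleGraph (Fin n), H.Connected → ¬ ContainsCopy H (linearForest k) →
          specRad H ≤ specRad G) →
        ∀ x : Fin n → ℝ, (∀ u, 0 < x u) →
          Matrix.mulVec (adjMat G) x = specRad G • x →
          (∀ u, x u ≤ 1) → (∃ u, x u = 1) →
          ∀ u, 1 / specRad G ≤ x u := by
  obtain ⟨a, b, c, d, hab, hcd, hac, had, hbc, hbd⟩ :=
    linearForest_exists_disjoint_adj hk (by omega)
  set m := Fintype.card ((i : Fin ℓ) × Fin (k i))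
  have hm : (1 : ℝ) ≤ m := by exact_mod_cast Fintype.card_pos_iff.mpr ⟨a⟩
  refine ⟨(2 * m) ^ 2 + 2, fun n hn G _ hfree hmax x hx heig hle ⟨w, hw⟩ u => ?_⟩
  have hρ : (2 * m : ℝ) ≤ specRad G := by
    have hn' : (2 * m : ℝ) ^ 2 + 2 ≤ n := by exact_mod_cast hn
    calc (2 * m : ℝ) ≤ √((n : ℝ) - 1) := Real.le_sqrt_of_sq_le (by linarith)
      _ ≤ specRad (starGraph w) := sqrt_le_specRad_starGraph (by omega) w
      _ ≤ specRad G := hmax _ (connected_starGraph w)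
          (not_containsCopy_starGraph w hab hcd hac had hbc hbd)
  rw [div_le_iff₀ (by linarith), mul_comm]
  by_cases huw : u = w
  · rw [huw, hw, mul_one]
    linarith
  · exact one_le_specRad_mul_of_isMax hfree hmax hρ hx heig hle hw huw

theorem statement_14 (ℓ : ℕ) (hℓ : 1 ≤ ℓ) (k : Fin ℓ → ℕ) (hk : ∀ i, 2 ≤ k i)
    (hmono : Antitone k)
    (p : ℕ) (hp : p = (∑ i, k i / 2) - 1) (hp1 : 1 ≤ p) :
    ∃ N : ℕ, ∀ n : ℕ, N ≤ n →
      ∀ G : SimpleGraph (Fin n), G.Connected → ¬ ContainsCopy G (linearForest k) →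
        (∀ H : SimpleGraph (Fin n), H.Connected → ¬ ContainsCopy H (linearForest k) →
          specRad H ≤ specRad G) →
        ∀ x : Fin n → ℝ, (∀ u, 0 < x u) →
          Matrix.mulVec (adjMat G) x = specRad G • x →
          (∀ u, x u ≤ 1) → (∃ u, x u = 1) →
          ∀ u, 1 / specRad G ≤ x u :=
  statement_14_general ℓ k hk p hp hp1
end

section
/- Let k ≥ 2 be an integer and set p′ = ⌊k/2⌋ − 1. For every integer m ≥ 1 there exists N (depending on m and k) such that for all n ≥ N: ex(m,n;P_k) ≤ max{m, p′·(m + n − 1)}. -/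
open SimpleGraph

/-!
Write `d = ⌊k/2⌋ - 1` and colour `X` with `true`. Colours alternate along a path, so the end `w`
of a path `w p₀ … p_{ℓ-1}` (where `ℓ ≤ k - 2`, as there is no `P_k`) is adjacent only to `p_i`
with `i` even: at most `d` of them, unless `k` is odd, `ℓ = k - 2` and `w ~ p_{ℓ-1}`. That
exception closes a cycle of length `k - 1`, impossible in a component with at least `k` vertices,
since leaving the cycle along an edge yields a `P_k`. Deleting the end of a longest path
inductively, every component `S` spans at most `d (|S| - 1)` edges when `k` is even or
`|S| ≥ k`; the remaining components span at most `ab ≤ d (a + b)` edges, `a` and `b` being the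
sizes of their colour classes. If no component met the first bound, every component would have
fewer than `k` vertices and an edge, hence a vertex in `X`, so `m + n ≤ (k - 1) m`; for
`n > (k - 2) m` this fails, and summing over the components gives `d (m + n - 1)`. For `k ≤ 3`
the graph is a matching, which has at most `m` edges.
-/

open Finset

lemma Nat.mul_le_mul_add_of_add_le {a b d : ℕ} (hab : a + b ≤ 2 * d + 2) (hd : 1 ≤ d) :
    a * b ≤ d * (a + b) := by
  nlinarith [sq_nonneg ((a : ℤ) - b)]

lemma Finset.sum_add_le_mul_sum {ι : Type*} [DecidableEq ι] {s : Finset ι} {f g : ι → ℕ}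
    {a : ℕ} (h : ∀ i ∈ s, f i ≤ a * g i) {i₀ : ι} (hi₀ : i₀ ∈ s) (h₀ : f i₀ + a ≤ a * g i₀) :
    ∑ i ∈ s, f i + a ≤ a * ∑ i ∈ s, g i := by
  rw [← add_sum_erase s f hi₀, ← add_sum_erase s g hi₀, mul_add, mul_sum]
  have := sum_le_sum (s := s.erase i₀) fun i hi => h i (mem_of_mem_erase hi)
  omega

namespace SimpleGraph

variable {V : Type*} {G : SimpleGraph V}

def HasPath (G : SimpleGraph V) (k : ℕ) : Prop :=
  ∃ l : List V, l.IsChain G.Adj ∧ l.Nodup ∧ l.length = k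

lemma HasPath.mono {j k : ℕ} (h : G.HasPath k) (hjk : j ≤ k) : G.HasPath j := by
  obtain ⟨l, hc, hnd, rfl⟩ := h
  exact ⟨l.take j, hc.take j, hnd.sublist (l.take_sublist j), by simp [hjk]⟩

lemma HasPath.containsCopy_pathG {k : ℕ} (h : G.HasPath k) : ContainsCopy G (pathG k) := by
  obtain ⟨l, hc, hnd, rfl⟩ := h
  refine ⟨fun i => l[i], fun i j hij => Fin.ext (hnd.getElem_inj_iff.1 hij), ?_⟩
  rintro ⟨i, hi⟩ ⟨j, hj⟩ (rfl | rfl)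
  · exact List.isChain_iff_getElem.1 hc i hj
  · exact (List.isChain_iff_getElem.1 hc j hi).symm

lemma Coloring.color_getElem_eq_iff_even (C : G.Coloring Bool) {l : List V}
    (hl : l.IsChain G.Adj) {i : ℕ} (hi : i < l.length) : C l[i] = C l[0] ↔ Even i := by
  induction i with
  | zero => simp
  | succ i ih =>
    have hne : C l[i] ≠ C l[i + 1] := C.valid (List.isChain_iff_getElem.1 hl i hi)
    rw [Nat.even_add_one, ← ih (by omega)]
    revert hne
    cases C l[i] <;> cases C l[i + 1] <;> cases C l[0] <;> simp

lemma exists_isChain_cons_forall_adj_mem (T : Finset V) {v : V} (hv : v ∈ T) :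
    ∃ w p, (w :: p).IsChain G.Adj ∧ (w :: p).Nodup ∧ (∀ x ∈ w :: p, x ∈ T) ∧
      ∀ x ∈ T, G.Adj w x → x ∈ p := by
  classical
  -- a longest path in `T`
  obtain ⟨⟨w, p⟩, ⟨hc, hnd, hT⟩, hmax⟩ :=
    (measure fun q : V × List V => #T - q.2.length).wf.has_min
      {q | (q.1 :: q.2).IsChain G.Adj ∧ (q.1 :: q.2).Nodup ∧ ∀ x ∈ q.1 :: q.2, x ∈ T}
      ⟨(v, []), by simp [hv]⟩
  refine ⟨w, p, hc, hnd, hT, fun x hx hadj => ?_⟩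
  by_contra hxp
  have hxw : x ≠ w := (G.ne_of_adj hadj).symm
  have hnd' : (x :: w :: p).Nodup := List.nodup_cons.2 ⟨by simp [hxw, hxp], hnd⟩
  have hcard : (x :: w :: p).length ≤ #T := by
    rw [← List.toFinset_card_of_nodup hnd']
    exact card_le_card fun y hy => by
      rcases List.mem_cons.1 (List.mem_toFinset.1 hy) with rfl | hy
      exacts [hx, hT y hy]
  refine hmax (x, w :: p) ⟨List.isChain_cons_cons.2 ⟨hadj.symm, hc⟩, hnd', ?_⟩ ?_
  · rintro y (_ | ⟨_, hy⟩)
    exacts [hx, hT y hy]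
  · change #T - (p.length + 1) < #T - p.length
    simp only [List.length_cons] at hcard
    omega

lemma hasPath_length_add_one_of_cycle {q : List V} (hq : Cycle.Chain G.Adj (q : Cycle V))
    (hnd : q.Nodup) {u v : V} (hu : u ∈ q) (hv : v ∉ q) (huv : G.Adj u v) :
    G.HasPath (q.length + 1) := by
  obtain ⟨s, t, rfl⟩ := List.append_of_mem hu
  have hrot : ((s ++ u :: t : List V) : Cycle V) = ((u :: (t ++ s) : List V) : Cycle V) :=
    Cycle.coe_eq_coe.2 List.isRotated_append
  rw [hrot, Cycle.chain_coe_cons, ← List.cons_append] at hq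
  refine ⟨v :: u :: (t ++ s), List.isChain_cons_cons.2 ⟨huv.symm, hq.left_of_append⟩,
    List.nodup_cons.2 ⟨?_, ?_⟩, by simp; omega⟩
  · simpa [or_comm, or_left_comm] using hv
  · exact (List.perm_append_comm.trans (by simp)).nodup_iff.1 hnd

lemma hasPath_length_add_one_of_cycle_of_reachable {S : Finset V}
    (hS : ∀ x ∈ S, ∀ y ∈ S, G.Reachable x y) {q : List V} (hq : Cycle.Chain G.Adj (q : Cycle V))
    (hnd : q.Nodup) (hqS : ∀ x ∈ q, x ∈ S) (hlen : q.length < #S) :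
    G.HasPath (q.length + 1) := by
  classical
  obtain ⟨z, hzS, hzq⟩ : ∃ z ∈ S, z ∉ q := by
    by_contra! h
    have := card_le_card (fun x hx => List.mem_toFinset.2 (h x hx))
    rw [List.toFinset_card_of_nodup hnd] at this
    omega
  rcases q with _ | ⟨u₀, q⟩
  · exact ⟨[z], by simp⟩
  obtain ⟨⟨⟨u, v⟩, huv⟩, -, hu, hv⟩ :=
    (hS u₀ (hqS u₀ List.mem_cons_self) z hzS).some.exists_boundary_dart {x | x ∈ u₀ :: q}
      List.mem_cons_self hzq
  exact hasPath_length_add_one_of_cycle hq hnd hu hv huv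

variable [DecidableRel G.Adj]

variable (G) in
/-- Twice the number of edges of the induced subgraph `G[S]`. -/
def inducedDegreeSum (S : Finset V) : ℕ :=
  ∑ v ∈ S, #{x ∈ S | G.Adj v x}

lemma inducedDegreeSum_le_mul (C : G.Coloring Bool) (S : Finset V) :
    G.inducedDegreeSum S ≤ 2 * (#{v ∈ S | C v} * #{v ∈ S | ¬ C v}) := by
  have hnbr : ∀ v ∈ S, #{x ∈ S | G.Adj v x} ≤ #{x ∈ S | C x ≠ C v} := fun v _ =>
    card_le_card <| monotone_filter_right S fun x _ hadj => (C.valid hadj).symm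
  unfold inducedDegreeSum
  rw [← sum_filter_add_sum_filter_not S (fun v => C v)]
  calc _ ≤ ∑ _ ∈ {v ∈ S | C v}, #{v ∈ S | ¬ C v} + ∑ _ ∈ {v ∈ S | ¬ C v}, #{v ∈ S | C v} := by
        refine add_le_add (sum_le_sum fun v hv => ?_) (sum_le_sum fun v hv => ?_) <;>
          obtain ⟨hvS, hv⟩ := mem_filter.1 hv <;> simpa [hv] using hnbr v hvS
    _ = _ := by simp only [sum_const, smul_eq_mul]; ring

lemma inducedDegreeSum_univ [Fintype V] : G.inducedDegreeSum univ = 2 * #G.edgeFinset := by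
  simp [inducedDegreeSum, ← sum_degrees_eq_twice_card_edges, ← card_neighborFinset_eq_degree,
    neighborFinset_eq_filter]

theorem card_edgeFinset_le_of_not_hasPath_three [Fintype V] (C : G.Coloring Bool)
    (hpath : ¬ G.HasPath 3) : #G.edgeFinset ≤ #{v | C v} := by
  have hdeg : ∀ v, G.degree v ≤ 1 := by
    intro v
    by_contra! h
    rw [← card_neighborFinset_eq_degree] at h
    obtain ⟨x, hx, y, hy, hxy⟩ := one_lt_card.1 h
    rw [mem_neighborFinset] at hx hy
    exact hpath ⟨[x, v, y], by simp [hx.symm, hy], by simp [hxy, hx.ne', hy.ne], rfl⟩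
  have hbip : G.IsBipartiteWith ({v | C v} : Finset V) ({v | ¬ C v} : Finset V) := by
    refine ⟨disjoint_coe.2 (disjoint_filter_filter_not _ _ _), fun v w hadj => ?_⟩
    have := C.valid hadj
    simp only [coe_filter, mem_univ, true_and, Set.mem_ofPred_eq]
    revert this
    cases C v <;> cases C w <;> simp
  rw [← isBipartiteWith_sum_degrees_eq_card_edges hbip]
  simpa using sum_le_sum fun v (_ : v ∈ ({v | C v} : Finset V)) => hdeg v

variable [DecidableEq V]

lemma inducedDegreeSum_insert {S : Finset V} {w : V} (hw : w ∉ S) :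
    G.inducedDegreeSum (insert w S) = G.inducedDegreeSum S + 2 * #{x ∈ S | G.Adj w x} := by
  have hdeg : ∀ v ∈ S, #{x ∈ insert w S | G.Adj v x} =
      #{x ∈ S | G.Adj v x} + if G.Adj w v then 1 else 0 := by
    intro v _
    rw [filter_insert]
    simp only [G.adj_comm w v]
    split_ifs
    · exact card_insert_of_notMem (fun h => hw (mem_filter.1 h).1)
    · rfl
  unfold inducedDegreeSum
  rw [sum_insert hw, filter_insert, if_neg (G.irrefl), sum_congr rfl hdeg, sum_add_distrib,
    sum_boole, Nat.cast_id]
  ring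

lemma inducedDegreeSum_le_of_forall_isChain_cons (d : ℕ) (T : Finset V)
    (hloc : ∀ w p, (w :: p).IsChain G.Adj → (w :: p).Nodup → (∀ x ∈ w :: p, x ∈ T) →
      #{x ∈ p.toFinset | G.Adj w x} ≤ d) :
    G.inducedDegreeSum T ≤ 2 * d * (#T - 1) := by
  induction T using Finset.strongInduction with
  | H T ih =>
  rcases T.eq_empty_or_nonempty with rfl | ⟨v, hv⟩
  · simp [inducedDegreeSum]
  obtain ⟨w, p, hc, hnd, hT, hmax⟩ := exists_isChain_cons_forall_adj_mem (G := G) T hv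
  have hw : w ∈ T := hT w List.mem_cons_self
  have hdeg : #{x ∈ T.erase w | G.Adj w x} ≤ d := by
    refine le_trans (card_le_card fun x hx => ?_) (hloc w p hc hnd hT)
    obtain ⟨hxT, hadj⟩ := mem_filter.1 hx
    exact mem_filter.2 ⟨List.mem_toFinset.2 (hmax x (mem_of_mem_erase hxT) hadj), hadj⟩
  have hdeg' : #{x ∈ T.erase w | G.Adj w x} ≤ #T - 1 :=
    (card_filter_le _ _).trans (card_erase_of_mem hw).le
  have hrest := ih (T.erase w) (erase_ssubset hw) fun w' p' hc' hnd' hT' =>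
    hloc w' p' hc' hnd' fun x hx => mem_of_mem_erase (hT' x hx)
  conv_lhs => rw [← insert_erase hw, inducedDegreeSum_insert (notMem_erase w T)]
  rw [card_erase_of_mem hw] at hrest
  generalize #T - 1 = s at hrest hdeg' ⊢
  cases s with
  | zero => simp_all
  | succ s =>
    rw [Nat.add_sub_cancel] at hrest
    rw [mul_add_one]
    omega

lemma card_filter_adj_le_of_isChain_cons (C : G.Coloring Bool) {w : V} {p : List V} {d : ℕ}
    (hc : (w :: p).IsChain G.Adj) (hlen : p.length ≤ 2 * d + 1)
    (hlast : ∀ h : p.length = 2 * d + 1, ¬ G.Adj w p[2 * d]) :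
    #{x ∈ p.toFinset | G.Adj w x} ≤ d := by
  have hsub : {x ∈ p.toFinset | G.Adj w x} ⊆ (range d).image (fun i => p.getD (2 * i) w) := by
    intro x hx
    obtain ⟨hxp, hadj⟩ := mem_filter.1 hx
    obtain ⟨j, hj, rfl⟩ := List.mem_iff_getElem.1 (List.mem_toFinset.1 hxp)
    have hodd : ¬ Even (j + 1) := by
      rw [← C.color_getElem_eq_iff_even hc (by simpa using hj)]
      exact (C.valid hadj).symm
    obtain ⟨i, rfl⟩ : Even j := by simpa [Nat.even_add_one] using hodd
    have hid : i < d := by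
      by_contra hdi
      exact hlast (by omega) (by convert hadj using 2; omega)
    exact mem_image.2 ⟨i, mem_range.2 hid, by simp [two_mul, hj]⟩
  exact (card_le_card hsub).trans (card_image_le.trans (card_range d).le)

theorem inducedDegreeSum_le_of_not_hasPath (C : G.Coloring Bool) {k : ℕ} (hk : ¬ G.HasPath k)
    {S : Finset V} (hS : ∀ x ∈ S, ∀ y ∈ S, G.Reachable x y) (hbig : Even k ∨ k ≤ #S) :
    G.inducedDegreeSum S ≤ 2 * (k / 2 - 1) * (#S - 1) := by
  refine inducedDegreeSum_le_of_forall_isChain_cons _ S fun w p hc hnd hT => ?_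
  have hlen : p.length + 1 < k := by
    by_contra h
    exact hk (HasPath.mono ⟨w :: p, hc, hnd, rfl⟩ (by simp; omega))
  refine card_filter_adj_le_of_isChain_cons C hc (by omega) fun hp hadj => ?_
  have hkS : k ≤ #S := hbig.resolve_left (by rw [Nat.not_even_iff_odd]; exact ⟨k / 2, by omega⟩)
  have hcyc : Cycle.Chain G.Adj ((w :: p : List V) : Cycle V) := by
    rw [Cycle.chain_coe_cons, ← List.cons_append]
    refine hc.append (List.isChain_singleton w) ?_
    simp [List.getLast?_eq_getElem?, hp, hadj.symm]
  refine hk ((hasPath_length_add_one_of_cycle_of_reachable hS hcyc hnd hT ?_).mono ?_) <;>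
    simp <;> omega

theorem inducedDegreeSum_le_mul_card_of_not_hasPath (C : G.Coloring Bool) {k : ℕ} (hk : 4 ≤ k)
    (hpath : ¬ G.HasPath k) {S : Finset V} (hS : ∀ x ∈ S, ∀ y ∈ S, G.Reachable x y) :
    G.inducedDegreeSum S ≤ 2 * (k / 2 - 1) * #S := by
  by_cases hbig : Even k ∨ k ≤ #S
  · exact (inducedDegreeSum_le_of_not_hasPath C hpath hS hbig).trans
      (Nat.mul_le_mul_left _ (Nat.sub_le _ _))
  have hcard := card_filter_add_card_filter_not (s := S) (fun v => C v)
  have hodd : ¬ Even k := fun h => hbig (Or.inl h)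
  rw [Nat.not_even_iff_odd] at hodd
  obtain ⟨j, rfl⟩ := hodd
  refine (inducedDegreeSum_le_mul C S).trans ?_
  rw [mul_assoc, ← hcard]
  exact Nat.mul_le_mul_left 2 (Nat.mul_le_mul_add_of_add_le (by omega) (by omega))

variable [Fintype V]

lemma inducedDegreeSum_univ_eq_sum_connectedComponent :
    G.inducedDegreeSum univ = ∑ c : G.ConnectedComponent, G.inducedDegreeSum c.supp.toFinset := by
  classical
  unfold inducedDegreeSum
  rw [← sum_fiberwise univ G.connectedComponentMk]
  refine sum_congr rfl fun c _ => sum_congr (by ext; simp) fun v hv => congrArg card ?_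
  ext x
  simp only [mem_filter, mem_univ, true_and, Set.mem_toFinset,
    ConnectedComponent.mem_supp_iff] at hv ⊢
  exact ⟨fun hadj => ⟨hv ▸ (ConnectedComponent.connectedComponentMk_eq_of_adj hadj).symm, hadj⟩,
    And.right⟩

lemma sum_card_filter_mem_supp (T : Finset V) :
    ∑ c : G.ConnectedComponent, #{v ∈ T | v ∈ c.supp} = #T := by
  classical
  simpa [eq_comm] using (card_eq_sum_card_fiberwise (f := G.connectedComponentMk) (s := T)
    (t := univ) fun _ _ => mem_univ _).symm

theorem card_edgeFinset_le_of_not_hasPath (C : G.Coloring Bool) {k : ℕ} (hk : 4 ≤ k)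
    (hpath : ¬ G.HasPath k) (hcard : (k - 1) * #{v | C v} < Fintype.card V) :
    #G.edgeFinset ≤ (k / 2 - 1) * (Fintype.card V - 1) := by
  classical
  have hS : ∀ c : G.ConnectedComponent, ∀ x ∈ c.supp.toFinset, ∀ y ∈ c.supp.toFinset,
      G.Reachable x y := by
    intro c x hx y hy
    simp only [Set.mem_toFinset, ConnectedComponent.mem_supp_iff] at hx hy
    exact ConnectedComponent.exact (hx.trans hy.symm)
  have hne : ∀ c : G.ConnectedComponent, 1 ≤ #c.supp.toFinset := fun c =>
    card_pos.2 (Set.toFinset_nonempty.2 c.nonempty_supp)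
  have hcomp : ∑ c : G.ConnectedComponent, #c.supp.toFinset = Fintype.card V := by
    simpa only [Set.filter_mem_univ_eq_toFinset, card_univ] using
      sum_card_filter_mem_supp (G := G) univ
  obtain ⟨c₀, hc₀⟩ : ∃ c : G.ConnectedComponent,
      G.inducedDegreeSum c.supp.toFinset + 2 * (k / 2 - 1) ≤
        2 * (k / 2 - 1) * #c.supp.toFinset := by
    by_contra! hbad
    refine hcard.not_ge ?_
    rw [← hcomp, ← sum_card_filter_mem_supp (G := G) {v | C v}, mul_sum]
    refine sum_le_sum fun c _ => ?_
    have hpos := Nat.le_mul_of_pos_right (2 * (k / 2 - 1)) (hne c)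
    have hsmall : #c.supp.toFinset < k := by
      by_contra h
      have hgood := inducedDegreeSum_le_of_not_hasPath C hpath (hS c) (Or.inr (by omega))
      rw [Nat.mul_sub_one] at hgood
      have := hbad c
      omega
    have hleft : 0 < #{v ∈ c.supp.toFinset | C v} := by
      by_contra h
      have hzero := inducedDegreeSum_le_mul C c.supp.toFinset
      rw [Nat.eq_zero_of_not_pos h, zero_mul, mul_zero] at hzero
      have := hbad c
      omega
    rw [filter_comm, Set.filter_mem_univ_eq_toFinset]
    calc #c.supp.toFinset ≤ (k - 1) * 1 := by omega
      _ ≤ _ := Nat.mul_le_mul_left _ hleft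
  have := sum_add_le_mul_sum
    (fun c _ => inducedDegreeSum_le_mul_card_of_not_hasPath C hk hpath (hS c)) (mem_univ c₀) hc₀
  rw [← inducedDegreeSum_univ_eq_sum_connectedComponent, inducedDegreeSum_univ, hcomp] at this
  rw [Nat.mul_sub_one]
  apply Nat.le_sub_of_add_le
  linarith

end SimpleGraph

theorem statement_16_general (k : ℕ) (p' : ℕ) (hp' : p' = k / 2 - 1)
    (m : ℕ) :
    ∃ N : ℕ, ∀ n : ℕ, N ≤ n →
      bipEx m n (pathG k) ≤ max m (p' * (m + n - 1)) := by
  refine ⟨k * m + 1, fun n hn => csSup_le' ?_⟩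
  rintro _ ⟨G, hbip, hfree, rfl⟩
  classical
  let C : G.Coloring Bool := Coloring.mk Sum.isLeft fun h => hbip _ _ h
  have hpath : ¬ G.HasPath k := fun h => hfree h.containsCopy_pathG
  have hleft : #{v | C v} = m := by
    have : ({v | C v} : Finset (Fin m ⊕ Fin n)) = univ.map .inl := by
      ext v
      cases v <;> simp [C] <;> rfl
    rw [this, card_map, card_univ, Fintype.card_fin]
  have hV : Fintype.card (Fin m ⊕ Fin n) = m + n := by simp
  rw [← coe_edgeFinset, Set.ncard_coe_finset]
  rcases le_or_gt k 3 with hk | hk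
  · exact le_max_of_le_left <|
      (card_edgeFinset_le_of_not_hasPath_three C fun h => hpath (h.mono hk)).trans hleft.le
  · refine le_max_of_le_right (hp' ▸ hV ▸ card_edgeFinset_le_of_not_hasPath C hk hpath ?_)
    rw [hleft, hV]
    have := Nat.mul_le_mul_right m (Nat.sub_le k 1)
    omega

theorem statement_16 (k : ℕ) (hk : 2 ≤ k) (p' : ℕ) (hp' : p' = k / 2 - 1)
    (m : ℕ) (hm : 1 ≤ m) :
    ∃ N : ℕ, ∀ n : ℕ, N ≤ n →
      bipEx m n (pathG k) ≤ max m (p' * (m + n - 1)) :=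
  statement_16_general k p' hp' m
end

section
/- Let n ≥ k ≥ 2 be integers. Then every graph on n vertices containing no subgraph isomorphic to the path P_k on k vertices has at most (k−2)·n/2 edges; that is, ex(n,P_k) ≤ (k−2)n/2. -/
/-! Erdős–Gallai. By induction on a vertex set `s`, the number of ordered pairs of adjacent
vertices of `s` is at most `(k - 2) * #s`. A vertex with fewer than `(k - 1) / 2` neighbours
in `s` can be deleted. Otherwise take a longest path in `s`: its endpoints have all their
neighbours on it, and their degrees add up to at least `k - 1`, which exceeds its length, so by
Pósa's rotation its vertices carry a cycle. Maximality then forbids any edge leaving this set of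
at most `k - 1` vertices, so inside it every vertex has at most `k - 2` neighbours, and the
induction continues on the rest of `s`. -/

open SimpleGraph

namespace List

variable {α : Type*} [DecidableEq α]

theorem exists_eq_append_cons_cons_of_length_le_card_add_card :
    ∀ {l : List α} {X Y : Finset α}, l ≠ [] → (∀ x ∈ X, x ∈ l.dropLast) →
      (∀ y ∈ Y, y ∈ l.tail) → l.length ≤ X.card + Y.card →
      ∃ p q x y, l = p ++ x :: y :: q ∧ x ∈ X ∧ y ∈ Y
  | [a], X, Y, _, hX, hY, hlen => by
    have hX0 : X = ∅ := Finset.eq_empty_of_forall_notMem fun x hx => by simpa using hX x hx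
    have hY0 : Y = ∅ := Finset.eq_empty_of_forall_notMem fun y hy => by simpa using hY y hy
    simp [hX0, hY0] at hlen
  | a :: b :: l, X, Y, _, hX, hY, hlen => by
    by_cases hab : a ∈ X ∧ b ∈ Y
    · exact ⟨[], l, a, b, rfl, hab⟩
    have hlen' : (b :: l).length ≤ (X.erase a).card + (Y.erase b).card := by
      have := Finset.pred_card_le_card_erase (s := X) (a := a)
      have := Finset.pred_card_le_card_erase (s := Y) (a := b)
      by_cases ha : a ∈ X
      · rw [Finset.erase_eq_of_notMem (by tauto : b ∉ Y)]
        simp only [length_cons] at hlen ⊢; omega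
      · rw [Finset.erase_eq_of_notMem ha]
        simp only [length_cons] at hlen ⊢; omega
    obtain ⟨p, q, x, y, hl, hx, hy⟩ := exists_eq_append_cons_cons_of_length_le_card_add_card
      (cons_ne_nil b l)
      (fun x hx => by
        obtain ⟨hxa, hx⟩ := Finset.mem_erase.1 hx
        simpa [hxa] using hX x hx)
      (fun y hy => by
        obtain ⟨hyb, hy⟩ := Finset.mem_erase.1 hy
        simpa [hyb] using hY y hy)
      hlen'
    exact ⟨a :: p, q, x, y, by rw [hl, cons_append], Finset.mem_of_mem_erase hx,
      Finset.mem_of_mem_erase hy⟩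

end List

namespace SimpleGraph

variable {V : Type*} (G : SimpleGraph V)

theorem containsCopy_pathG_of_isChain {l : List V} (hnodup : l.Nodup)
    (hchain : l.IsChain G.Adj) {k : ℕ} (hk : k ≤ l.length) : ContainsCopy G (pathG k) := by
  refine ⟨fun i => l[i.val], fun i j hij => Fin.ext ((hnodup.getElem_inj_iff).1 hij), ?_⟩
  rintro i j (hij | hji)
  · simpa only [← hij] using hchain.getElem i (by omega)
  · simpa only [← hji] using (hchain.getElem j (by omega)).symm

structure IsPathIn (s : Finset V) (l : List V) : Prop where
  nodup : l.Nodup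
  isChain : l.IsChain G.Adj
  subset : ∀ x ∈ l, x ∈ s

variable {G} {s : Finset V} {l : List V}

namespace IsPathIn

theorem length_le_card [DecidableEq V] (hl : G.IsPathIn s l) : l.length ≤ s.card := by
  rw [← List.toFinset_card_of_nodup hl.nodup]
  exact Finset.card_le_card fun x hx => hl.subset x (List.mem_toFinset.1 hx)

theorem cons (hl : G.IsPathIn s l) {b : V} (hb : b ∈ s) (hbl : b ∉ l)
    (hadj : ∀ x ∈ l.head?, G.Adj b x) : G.IsPathIn s (b :: l) :=
  ⟨List.nodup_cons.2 ⟨hbl, hl.nodup⟩, hl.isChain.cons hadj,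
    by simpa only [List.mem_cons, forall_eq_or_imp] using ⟨hb, hl.subset⟩⟩

theorem reverse (hl : G.IsPathIn s l) : G.IsPathIn s l.reverse :=
  ⟨List.nodup_reverse.2 hl.nodup,
    List.isChain_reverse.2 (hl.isChain.imp fun _ _ h => h.symm),
    fun x hx => hl.subset x (List.mem_reverse.1 hx)⟩

theorem rotate {l₁ l₂ : List V} (hl : G.IsPathIn s (l₁ ++ l₂))
    (hclose : ∀ x ∈ (l₁ ++ l₂).getLast?, ∀ y ∈ (l₁ ++ l₂).head?, G.Adj x y) :
    G.IsPathIn s (l₂ ++ l₁) := by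
  refine ⟨List.nodup_append_comm.1 hl.nodup, ?_, fun x hx => hl.subset x (by grind)⟩
  obtain ⟨h₁, h₂, -⟩ := List.isChain_append.1 hl.isChain
  refine h₂.append h₁ fun x hx y hy => hclose x ?_ y ?_
  · rw [Option.mem_def] at hx ⊢
    simp [List.getLast?_append, hx]
  · rw [Option.mem_def] at hy ⊢
    simp [List.head?_append, hy]

theorem exists_longer_of_cycle {c : List V} (hc : G.IsPathIn s c)
    (hclose : ∀ x ∈ c.getLast?, ∀ y ∈ c.head?, G.Adj x y) {a b : V} (ha : a ∈ c)
    (hb : b ∈ s) (hbc : b ∉ c) (hab : G.Adj a b) :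
    ∃ l, G.IsPathIn s l ∧ l.length = c.length + 1 := by
  obtain ⟨c₁, c₂, rfl⟩ := List.append_of_mem ha
  refine ⟨b :: ((a :: c₂) ++ c₁), (hc.rotate hclose).cons hb
    (mt List.perm_append_comm.mem_iff.2 hbc) (by simpa using hab.symm), by simp; omega⟩

theorem mem_of_adj_head_of_forall_length_le (hl : G.IsPathIn s l)
    (hmax : ∀ l', G.IsPathIn s l' → l'.length ≤ l.length) {h y : V} (hh : h ∈ l.head?)
    (hy : y ∈ s) (hhy : G.Adj h y) : y ∈ l := by
  by_contra hyl
  have := hmax _ (hl.cons hy hyl fun x hx => by rw [Option.mem_unique hx hh]; exact hhy.symm)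
  simp at this

variable [DecidableEq V] [DecidableRel G.Adj]

-- Pósa's rotation: pigeonhole yields consecutive `x, y` on `l` with `x ~ e` and `y ~ h`, and
-- reversing the segment from `y` to `e` closes a cycle through all of `l`.
theorem exists_perm_cycle (hl : G.IsPathIn s l) {h e : V} (hh : l.head? = some h)
    (he : l.getLast? = some e) (hNh : ∀ y ∈ s, G.Adj h y → y ∈ l)
    (hNe : ∀ y ∈ s, G.Adj e y → y ∈ l)
    (hdeg : l.length ≤ (s.filter (G.Adj h)).card + (s.filter (G.Adj e)).card) :
    ∃ c, c.Perm l ∧ G.IsPathIn s c ∧ ∀ x ∈ c.getLast?, ∀ y ∈ c.head?, G.Adj x y := by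
  have hne : l ≠ [] := by rintro rfl; simp at hh
  have hX : ∀ z ∈ s.filter (G.Adj e), z ∈ l.dropLast := by
    intro z hz
    obtain ⟨hzs, hez⟩ := Finset.mem_filter.1 hz
    have hzl := hNe z hzs hez
    rw [← List.dropLast_append_getLast? e he] at hzl
    simpa [(G.ne_of_adj hez).symm] using hzl
  have hY : ∀ z ∈ s.filter (G.Adj h), z ∈ l.tail := by
    intro z hz
    obtain ⟨hzs, hhz⟩ := Finset.mem_filter.1 hz
    have hzl := hNh z hzs hhz
    rw [List.eq_cons_of_mem_head? hh] at hzl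
    simpa [(G.ne_of_adj hhz).symm] using hzl
  obtain ⟨p, q, x, y, rfl, hx, hy⟩ :=
    List.exists_eq_append_cons_cons_of_length_le_card_add_card hne hX hY (by omega)
  have hperm : (p ++ [x] ++ (y :: q).reverse).Perm (p ++ x :: y :: q) := by
    simpa using ((List.reverse_perm (y :: q)).cons x).append_left p
  have hlast : (y :: q).reverse.head? = some e := by
    rw [List.head?_reverse]; simpa [List.getLast?_append] using he
  have hfirst : (p ++ [x] ++ (y :: q).reverse).head? = some h := by
    simpa [List.head?_append] using hh
  obtain ⟨h₁, h₂, -⟩ := List.isChain_append.1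
    (by simpa using hl.isChain : ((p ++ [x]) ++ (y :: q)).IsChain G.Adj)
  refine ⟨_, hperm, ⟨hperm.nodup_iff.2 hl.nodup, h₁.append
    (List.isChain_reverse.2 (h₂.imp fun _ _ h => h.symm)) ?_,
    fun z hz => hl.subset z (hperm.mem_iff.1 hz)⟩, ?_⟩
  · intro a ha b hb
    rw [hlast, Option.mem_some_iff] at hb
    rw [List.getLast?_concat, Option.mem_some_iff] at ha
    simpa only [← ha, ← hb] using (Finset.mem_filter.1 hx).2.symm
  · intro a ha b hb
    rw [hfirst, Option.mem_some_iff] at hb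
    rw [List.reverse_cons, ← List.append_assoc, List.getLast?_concat, Option.mem_some_iff] at ha
    simpa only [← ha, ← hb] using (Finset.mem_filter.1 hy).2.symm

theorem mem_of_adj_of_forall_length_le (hl : G.IsPathIn s l)
    (hmax : ∀ l', G.IsPathIn s l' → l'.length ≤ l.length)
    (hdeg : ∀ h ∈ l.head?, ∀ e ∈ l.getLast?,
      l.length ≤ (s.filter (G.Adj h)).card + (s.filter (G.Adj e)).card)
    {a b : V} (ha : a ∈ l) (hb : b ∈ s) (hab : G.Adj a b) : b ∈ l := by
  by_contra hbl
  have hne : l ≠ [] := List.ne_nil_of_mem ha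
  obtain ⟨h, hh⟩ := Option.ne_none_iff_exists'.1 (mt List.head?_eq_none_iff.1 hne)
  obtain ⟨e, he⟩ := Option.ne_none_iff_exists'.1 (mt List.getLast?_eq_none_iff.1 hne)
  obtain ⟨c, hcl, hc, hclose⟩ := hl.exists_perm_cycle hh he
    (fun y hy hhy => hl.mem_of_adj_head_of_forall_length_le hmax hh hy hhy)
    (fun y hy hey => List.mem_reverse.1 <| hl.reverse.mem_of_adj_head_of_forall_length_le
      (by simpa using hmax) (by rwa [List.head?_reverse]) hy hey)
    (hdeg h hh e he)
  obtain ⟨l', hl', hlen⟩ :=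
    hc.exists_longer_of_cycle hclose (hcl.mem_iff.2 ha) hb (mt hcl.mem_iff.1 hbl) hab
  have := hmax l' hl'
  rw [hlen, hcl.length_eq] at this
  omega

end IsPathIn

theorem exists_isPathIn_forall_length_le [DecidableEq V] (s : Finset V) :
    ∃ l, G.IsPathIn s l ∧ ∀ l', G.IsPathIn s l' → l'.length ≤ l.length := by
  obtain ⟨l, hl, hmax⟩ := (measure fun l : List V => s.card - l.length).wf.has_min
    {l | G.IsPathIn s l} ⟨[], List.nodup_nil, List.isChain_nil, by simp⟩
  refine ⟨l, hl, fun l' hl' => ?_⟩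
  by_contra! hlt
  exact hmax l' hl' (show s.card - l'.length < s.card - l.length by
    have := hl'.length_le_card; omega)

theorem exists_closed_of_le_two_mul_card_filter [DecidableEq V] [DecidableRel G.Adj] {k : ℕ}
    (hG : ¬ContainsCopy G (pathG k)) (hs : s.Nonempty)
    (hmin : ∀ v ∈ s, k - 1 ≤ 2 * (s.filter (G.Adj v)).card) :
    ∃ t ⊆ s, t.Nonempty ∧ t.card ≤ k - 1 ∧
      ∀ a ∈ t, ∀ b ∈ s, G.Adj a b → b ∈ t := by
  obtain ⟨l, hl, hmax⟩ := exists_isPathIn_forall_length_le (G := G) s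
  have hlen : l.length < k :=
    not_le.1 fun hk => hG (containsCopy_pathG_of_isChain G hl.nodup hl.isChain hk)
  obtain ⟨v, hv⟩ := hs
  have hpos : 1 ≤ l.length :=
    hmax [v] ⟨List.nodup_singleton v, List.isChain_singleton v, by simpa using hv⟩
  refine ⟨l.toFinset, fun x hx => hl.subset x (List.mem_toFinset.1 hx), ?_, ?_,
    fun a ha b hb hab => List.mem_toFinset.2 <|
      hl.mem_of_adj_of_forall_length_le hmax ?_ (List.mem_toFinset.1 ha) hb hab⟩
  · exact (List.toFinset_nonempty_iff l).2 (List.ne_nil_of_length_pos hpos)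
  · rw [List.toFinset_card_of_nodup hl.nodup]; omega
  · intro h hh e he
    have := hmin h (hl.subset h (List.mem_of_mem_head? hh))
    have := hmin e (hl.subset e (List.mem_of_mem_getLast? he))
    omega

section

variable (G) [DecidableRel G.Adj]

def adjPairs (s : Finset V) : Finset (V × V) :=
  (s ×ˢ s).filter fun p => G.Adj p.1 p.2

theorem adjPairs_subset_offDiag (s : Finset V) : G.adjPairs s ⊆ s.offDiag := by
  rintro ⟨a, b⟩ hab
  simp only [adjPairs, Finset.mem_filter, Finset.mem_product] at hab
  exact Finset.mem_offDiag.2 ⟨hab.1.1, hab.1.2, hab.2.ne⟩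

theorem card_adjPairs_univ [Fintype V] :
    (G.adjPairs Finset.univ).card = 2 * G.edgeFinset.card := by
  rw [← G.dart_card_eq_twice_card_edges]
  refine Finset.card_eq_of_equiv_fintype
    { toFun := fun p => ⟨p.1, (Finset.mem_filter.1 p.2).2⟩
      invFun := fun d => ⟨d.toProd, by simp [adjPairs, d.adj]⟩
      left_inv := fun _ => rfl
      right_inv := fun _ => rfl }

variable {G} [DecidableEq V]

theorem card_adjPairs_le_card_erase_add {s : Finset V} {v : V} (hv : v ∈ s) :
    (G.adjPairs s).card ≤ (G.adjPairs (s.erase v)).card + 2 * (s.filter (G.Adj v)).card := by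
  have hsub : G.adjPairs s ⊆ G.adjPairs (s.erase v) ∪
      ({v} ×ˢ s.filter (G.Adj v) ∪ s.filter (G.Adj v) ×ˢ {v}) := by
    rintro ⟨a, b⟩ hab
    simp only [adjPairs, Finset.mem_filter, Finset.mem_product] at hab
    obtain ⟨⟨ha, hb⟩, hab⟩ := hab
    rcases eq_or_ne a v with rfl | hav
    · simp [hb, hab]
    rcases eq_or_ne b v with rfl | hbv
    · simp [ha, hab.symm]
    · simp [adjPairs, ha, hb, hab, hav, hbv]
  calc (G.adjPairs s).card
      ≤ _ := Finset.card_le_card hsub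
    _ ≤ _ + (_ + _) :=
      (Finset.card_union_le _ _).trans (by gcongr; exact Finset.card_union_le _ _)
    _ = _ := by simp only [Finset.card_product, Finset.card_singleton]; ring

theorem adjPairs_subset_union_sdiff {s t : Finset V}
    (hcl : ∀ a ∈ t, ∀ b ∈ s, G.Adj a b → b ∈ t) :
    G.adjPairs s ⊆ G.adjPairs t ∪ G.adjPairs (s \ t) := by
  rintro ⟨a, b⟩ hab
  simp only [adjPairs, Finset.mem_filter, Finset.mem_product] at hab
  by_cases ha : a ∈ t
  · simp [adjPairs, ha, hcl a ha b hab.1.2 hab.2, hab.2]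
  · have hb : b ∉ t := fun hb => ha (hcl b hb a hab.1.1 hab.2.symm)
    simp [adjPairs, ha, hb, hab]

theorem card_adjPairs_le_of_not_containsCopy {k : ℕ} (hG : ¬ContainsCopy G (pathG k))
    (s : Finset V) : (G.adjPairs s).card ≤ (k - 2) * s.card := by
  induction s using Finset.strongInduction with | H s ih => ?_
  rcases s.eq_empty_or_nonempty with rfl | hs
  · simp [adjPairs]
  by_cases hmin : ∀ v ∈ s, k - 1 ≤ 2 * (s.filter (G.Adj v)).card
  · obtain ⟨t, hts, htne, htk, hcl⟩ := exists_closed_of_le_two_mul_card_filter hG hs hmin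
    have ht : (G.adjPairs t).card ≤ (k - 2) * t.card := by
      calc (G.adjPairs t).card ≤ t.card * (t.card - 1) := by
            simpa [Finset.offDiag_card, Nat.mul_sub_one] using
              Finset.card_le_card (G.adjPairs_subset_offDiag t)
        _ ≤ t.card * (k - 2) := Nat.mul_le_mul_left _ (by omega)
        _ = (k - 2) * t.card := mul_comm _ _
    calc (G.adjPairs s).card
        ≤ (G.adjPairs t).card + (G.adjPairs (s \ t)).card :=
          (Finset.card_le_card (adjPairs_subset_union_sdiff hcl)).trans
            (Finset.card_union_le _ _)
      _ ≤ (k - 2) * t.card + (k - 2) * (s \ t).card :=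
          add_le_add ht (ih _ (Finset.sdiff_ssubset hts htne))
      _ = (k - 2) * s.card := by rw [← mul_add, add_comm, Finset.card_sdiff_add_card_eq_card hts]
  · push Not at hmin
    obtain ⟨v, hv, hdeg⟩ := hmin
    have hrest := ih _ (Finset.erase_ssubset hv)
    have hsplit : (k - 2) * (s.erase v).card + (k - 2) = (k - 2) * s.card := by
      rw [← Finset.card_erase_add_one hv, mul_add_one]
    have := card_adjPairs_le_card_erase_add (G := G) hv
    omega

end

end SimpleGraph

theorem statement_17_general (n k : ℕ) (hk : 2 ≤ k)
    (G : SimpleGraph (Fin n)) (hG : ¬ ContainsCopy G (pathG k)) :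
    ((G.edgeSet.ncard : ℕ) : ℝ) ≤ ((k : ℝ) - 2) * (n : ℝ) / 2 := by
  classical
  have h := G.card_adjPairs_le_of_not_containsCopy hG Finset.univ
  rw [G.card_adjPairs_univ, Finset.card_univ, Fintype.card_fin] at h
  have h' : (2 * G.edgeFinset.card : ℝ) ≤ ((k - 2 : ℕ) : ℝ) * n := by exact_mod_cast h
  rw [Nat.cast_sub hk, Nat.cast_ofNat] at h'
  rw [← G.coe_edgeFinset, Set.ncard_coe_finset]
  linarith

theorem statement_17 (n k : ℕ) (hk : 2 ≤ k) (hkn : k ≤ n)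
    (G : SimpleGraph (Fin n)) (hG : ¬ ContainsCopy G (pathG k)) :
    ((G.edgeSet.ncard : ℕ) : ℝ) ≤ ((k : ℝ) - 2) * (n : ℝ) / 2 :=
  statement_17_general n k hk G hG
end
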